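/- arXiv:cs/0509023 — 6 statements merged into one kernel-verified Lean document; each statement's English description precedes it below -/
import Mathlib

section
/- If a finite simple graph G has a near-obstruction (P, z), then G has a Meyniel obstruction contained in the subgraph induced by the vertices of P together with z. -/
open SimpleGraph

/-- The set of chords of a closed walk `c` in `G`: edges of `G` joining two
vertices of `c` that are not edges of `c` (i.e. not consecutive on `c`). -/
def SimpleGraph.cycleChords {V : Type*} (G : SimpleGraph V) {u : V} (c : G.Walk u u) :
    Set (Sym2 V) :=
  {e | e ∈ G.edgeSet ∧ (∀ x ∈ e, x ∈ c.support) ∧ e ∉ c.edges}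

/-- A Meyniel obstruction in `G` is an odd cycle of length at least five with
at most one chord. -/
def SimpleGraph.HasMeynielObstruction {V : Type*} (G : SimpleGraph V) : Prop :=
  ∃ (u : V) (c : G.Walk u u), c.IsCycle ∧ Odd c.length ∧ 5 ≤ c.length ∧
    (G.cycleChords c).ncard ≤ 1

/-- `v i` and `v j` span a chord of the path `v 0 - v 1 - ⋯ - v p`: an edge of `G`
joining two non-consecutive vertices of the path (with `i < j`). -/
def SimpleGraph.IsPathChord {V : Type*} (G : SimpleGraph V) (p : ℕ) (v : ℕ → V)
    (i j : ℕ) : Prop :=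
  i + 2 ≤ j ∧ j ≤ p ∧ G.Adj (v i) (v j)

/-- A near-obstruction `(P, z)`: a path `P = v 0 - ⋯ - v p` with `p` odd, `p ≥ 3`,
having at most one chord, any chord being of the form `v (t-1) v (t+1)` with
`0 < t < p - 1`, together with a vertex `z` off `P` adjacent to both ends of `P`,
satisfying one of the conditions of Type 1–4. -/
def SimpleGraph.IsNearObstruction {V : Type*} (G : SimpleGraph V) (p : ℕ) (v : ℕ → V)
    (z : V) : Prop :=
  Odd p ∧ 3 ≤ p ∧ Set.InjOn v (Set.Iic p) ∧
  (∀ i, i < p → G.Adj (v i) (v (i + 1))) ∧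
  -- any chord of `P` is of the form `v (t-1) v (t+1)` with `0 < t < p - 1`
  (∀ i j, G.IsPathChord p v i j → ∃ t, 0 < t ∧ t < p - 1 ∧ i = t - 1 ∧ j = t + 1) ∧
  -- `P` has at most one chord
  (∀ i j i' j', G.IsPathChord p v i j → G.IsPathChord p v i' j' → i = i' ∧ j = j') ∧
  (∀ i, i ≤ p → z ≠ v i) ∧ G.Adj z (v 0) ∧ G.Adj z (v p) ∧
  -- Type 1
  ((G.Adj (v 0) (v 2) ∧ ¬ G.Adj z (v 1) ∧ ¬ G.Adj z (v 2)) ∨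
  -- Type 2
   (G.Adj (v 1) (v 3) ∧ (¬ G.Adj z (v 1) ∨ ¬ G.Adj z (v 3))) ∨
  -- Type 3
   (¬ G.Adj (v 0) (v 2) ∧ ¬ G.Adj z (v 1)) ∨
  -- Type 4
   (¬ G.Adj (v 0) (v 2) ∧ ¬ G.Adj (v 1) (v 3) ∧ G.Adj z (v 1) ∧ ¬ G.Adj z (v 2)))

/-!
If `z` is adjacent to `v i` and `v j` with `i < j`, the cycle `z - v i - ⋯ - v j - z` has length
`j - i + 2`, and its chords are the edges `z - v m` with `i < m < j` and the chords of `P` between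
`v i` and `v j`. If that stretch contains the chord `v (t - 1) - v (t + 1)`, bypassing `v t` along
it gives a cycle of length `j - i + 1` whose chords are among the edges `z - v m`: it is the cycle of
the same kind for the chordless path obtained by deleting `v t`. So one looks for two neighbours
of `z` at odd (resp. even) distance with at most one chord in between. As `v 0` and `v p` are
neighbours of `z` and `p` is odd, `z` has a first neighbour `v b` with `b` odd; if the previous
neighbour `v a` of `z` is not `v (b - 1)`, the cycle through `v a` and `v b` works. If it is, the
triangle `z - v a - v b` is dealt with by going one neighbour of `z` further back, or forward past
the chord. The remaining cases (a chord `v 0 - v 2`, or `z` adjacent to `v 1`) are settled by the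
parity of the next neighbour of `z` along the path.
-/

theorem Nat.exists_first_ge {P : ℕ → Prop} {m n : ℕ} (hmn : m ≤ n) (hn : P n) :
    ∃ k, m ≤ k ∧ k ≤ n ∧ P k ∧ ∀ l, m ≤ l → l < k → ¬ P l := by
  classical
  have hex : ∃ k, m ≤ k ∧ P k := ⟨n, hmn, hn⟩
  obtain ⟨hmk, hk⟩ := Nat.find_spec hex
  exact ⟨Nat.find hex, hmk, Nat.find_min' hex ⟨hmn, hn⟩, hk,
    fun l hml hlk hl => Nat.find_min hex hlk ⟨hml, hl⟩⟩

theorem Nat.exists_last_lt {P : ℕ → Prop} {m n : ℕ} (hmn : m < n) (hm : P m) :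
    ∃ k, m ≤ k ∧ k < n ∧ P k ∧ ∀ l, k < l → l < n → ¬ P l := by
  classical
  refine ⟨Nat.findGreatest P (n - 1), Nat.le_findGreatest (by omega) hm, ?_,
    Nat.findGreatest_spec (by omega) hm,
    fun l hkl hln => Nat.findGreatest_is_greatest hkl (by omega)⟩
  have := Nat.findGreatest_le (P := P) (n - 1)
  omega

namespace SimpleGraph

variable {V : Type*} {G : SimpleGraph V}

structure IsIndexedPath (G : SimpleGraph V) (p : ℕ) (v : ℕ → V) : Prop where
  injOn : Set.InjOn v (Set.Iic p)
  adj : ∀ i < p, G.Adj (v i) (v (i + 1))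

def HasMeynielObstructionIn (G : SimpleGraph V) (S : Set V) : Prop :=
  ∃ (u : V) (c : G.Walk u u), c.IsCycle ∧ Odd c.length ∧ 5 ≤ c.length ∧
    (G.cycleChords c).ncard ≤ 1 ∧ ∀ x ∈ c.support, x ∈ S

theorem HasMeynielObstructionIn.of_cycle {S : Set V} {u : V} (c : G.Walk u u) (hc : c.IsCycle)
    (hodd : Odd c.length) (h5 : 5 ≤ c.length) (hchords : (G.cycleChords c).Subsingleton)
    (hS : ∀ x ∈ c.support, x ∈ S) : G.HasMeynielObstructionIn S :=
  ⟨u, c, hc, hodd, h5, (Set.ncard_le_one hchords.finite).2 hchords, hS⟩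

theorem IsPathChord.mono {p q : ℕ} {v : ℕ → V} {k l : ℕ} (h : G.IsPathChord p v k l)
    (hpq : p ≤ q) : G.IsPathChord q v k l :=
  ⟨h.1, h.2.1.trans hpq, h.2.2⟩

def dropIndex {α : Type*} (v : ℕ → α) (t : ℕ) : ℕ → α :=
  fun k => if k < t then v k else v (k + 1)

theorem not_isPathChord_dropIndex {p t : ℕ} {v : ℕ → V}
    (hone : ∀ k l, G.IsPathChord p v k l → k = t - 1 ∧ l = t + 1) {k l : ℕ} :
    ¬ G.IsPathChord (p - 1) (dropIndex v t) k l := by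
  rintro ⟨hkl, hlp, hadj⟩
  simp only [dropIndex] at hadj
  split_ifs at hadj with h₁ h₂ h₂ <;>
    have := hone _ _ ⟨by omega, by omega, hadj⟩ <;> omega

theorem mem_cycleChords_cases {v : ℕ → V} {z : V} {i j : ℕ} (c : G.Walk z z)
    (hsupp : ∀ x ∈ c.support, x ∈ insert z (v '' Set.Icc i j))
    (hzi : s(z, v i) ∈ c.edges) (hzj : s(z, v j) ∈ c.edges)
    (hstep : ∀ k, i ≤ k → k < j → s(v k, v (k + 1)) ∈ c.edges)
    {e : Sym2 V} (he : e ∈ G.cycleChords c) :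
    (∃ m, i < m ∧ m < j ∧ G.Adj z (v m) ∧ e = s(z, v m)) ∨
      ∃ k l, i ≤ k ∧ G.IsPathChord j v k l ∧ e = s(v k, v l) := by
  obtain ⟨hadj, hsub, hne⟩ := he
  induction e using Sym2.ind with | _ x y => ?_
  rw [mem_edgeSet] at hadj
  have apex : ∀ m, i ≤ m → m ≤ j → G.Adj z (v m) → s(z, v m) ∉ c.edges →
      ∃ m', i < m' ∧ m' < j ∧ G.Adj z (v m') ∧ s(z, v m) = s(z, v m') := by
    intro m him hmj hzm hm
    refine ⟨m, ?_, ?_, hzm, rfl⟩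
    · rcases him.lt_or_eq with him | rfl
      exacts [him, absurd hzi hm]
    · rcases hmj.lt_or_eq with hmj | rfl
      exacts [hmj, absurd hzj hm]
  have along : ∀ k l, i ≤ k → k < l → l ≤ j → G.Adj (v k) (v l) → s(v k, v l) ∉ c.edges →
      ∃ k' l', i ≤ k' ∧ G.IsPathChord j v k' l' ∧ s(v k, v l) = s(v k', v l') := by
    intro k l hik hkl hlj hkl' hne
    refine ⟨k, l, hik, ⟨?_, hlj, hkl'⟩, rfl⟩
    by_contra
    exact hne (by rw [show l = k + 1 by omega]; exact hstep k hik (by omega))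
  rcases hsupp x (hsub x (Sym2.mem_mk_left x y)) with rfl | ⟨k, ⟨hik, hkj⟩, rfl⟩ <;>
    rcases hsupp y (hsub y (Sym2.mem_mk_right _ y)) with rfl | ⟨l, ⟨hil, hlj⟩, rfl⟩
  · exact absurd rfl hadj.ne
  · exact Or.inl (apex l hil hlj hadj hne)
  · rw [Sym2.eq_swap] at hne ⊢
    exact Or.inl (apex k hik hkj hadj.symm hne)
  · rcases lt_trichotomy k l with hkl | rfl | hlk
    · exact Or.inr (along k l hik hkl hlj hadj hne)
    · exact absurd rfl hadj.ne
    · rw [Sym2.eq_swap] at hne ⊢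
      exact Or.inr (along l k hil hlk hkj hadj.symm hne)

namespace IsIndexedPath

variable {p : ℕ} {v : ℕ → V}

theorem exists_walk (hP : G.IsIndexedPath p v) {i j : ℕ} (hij : i ≤ j) (hjp : j ≤ p) :
    ∃ W : G.Walk (v j) (v i), W.IsPath ∧ W.length = j - i ∧
      (∀ x ∈ W.support, x ∈ v '' Set.Icc i j) ∧
      ∀ k, i ≤ k → k < j → s(v k, v (k + 1)) ∈ W.edges := by
  induction j, hij using Nat.le_induction with
  | base => exact ⟨Walk.nil, Walk.IsPath.nil, by simp, by simp, fun k h1 h2 => by omega⟩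
  | succ j hij ih =>
    obtain ⟨W, hW, hlen, hsupp, hedges⟩ := ih (by omega)
    have hfresh : v (j + 1) ∉ W.support := fun hmem => by
      obtain ⟨k, ⟨-, hkj⟩, hk⟩ := hsupp _ hmem
      have := hP.injOn (Set.mem_Iic.2 (by omega)) (Set.mem_Iic.2 hjp) hk
      omega
    refine ⟨Walk.cons (hP.adj j (by omega)).symm W, hW.cons hfresh,
      by rw [Walk.length_cons, hlen]; omega, fun x hx => ?_, fun k hik hkj => ?_⟩
    · rcases List.mem_cons.1 (Walk.support_cons _ _ ▸ hx) with rfl | hx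
      · exact ⟨j + 1, ⟨by omega, le_rfl⟩, rfl⟩
      · exact Set.image_mono (Set.Icc_subset_Icc_right (by omega)) (hsupp x hx)
    · rw [Walk.edges_cons, List.mem_cons]
      rcases Nat.lt_succ_iff_lt_or_eq.1 hkj with hkj | rfl
      · exact Or.inr (hedges k hik hkj)
      · exact Or.inl Sym2.eq_swap

theorem exists_cycle (hP : G.IsIndexedPath p v) {z : V} (hz : ∀ k ≤ p, z ≠ v k) {i j : ℕ}
    (hij : i < j) (hjp : j ≤ p) (hzi : G.Adj z (v i)) (hzj : G.Adj z (v j)) :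
    ∃ c : G.Walk z z, c.IsCycle ∧ c.length = j - i + 2 ∧
      (∀ x ∈ c.support, x ∈ insert z (v '' Set.Iic p)) ∧
      ∀ e ∈ G.cycleChords c, (∃ m, i < m ∧ m < j ∧ G.Adj z (v m) ∧ e = s(z, v m)) ∨
        ∃ k l, i ≤ k ∧ G.IsPathChord j v k l ∧ e = s(v k, v l) := by
  obtain ⟨W, hW, hlen, hsupp, hedges⟩ := hP.exists_walk hij.le hjp
  have hzW : z ∉ W.support := fun hmem => by
    obtain ⟨k, ⟨-, hkj⟩, rfl⟩ := hsupp z hmem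
    exact hz k (by omega) rfl
  set c : G.Walk z z := Walk.cons hzj (W.concat hzi.symm)
  have hcsupp : ∀ x ∈ c.support, x ∈ insert z (v '' Set.Icc i j) := by
    intro x hx
    simp only [c, Walk.support_cons, Walk.support_concat, List.mem_cons, List.mem_append,
      List.not_mem_nil, or_false] at hx
    rcases hx with rfl | hx | rfl
    · exact Set.mem_insert _ _
    · exact Set.mem_insert_of_mem _ (hsupp x hx)
    · exact Set.mem_insert _ _
  have hcycle : c.IsCycle := by
    refine (Walk.cons_isCycle_iff _ _).2 ⟨hW.concat hzW _, fun hmem => ?_⟩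
    rw [Walk.edges_concat, List.concat_eq_append, List.mem_append, List.mem_singleton] at hmem
    rcases hmem with hmem | hmem
    · exact hzW (W.fst_mem_support_of_mem_edges hmem)
    · rcases Sym2.eq_iff.1 hmem with ⟨h, -⟩ | ⟨-, h⟩
      · exact hz i (by omega) h
      · have := hP.injOn (Set.mem_Iic.2 hjp) (Set.mem_Iic.2 (by omega)) h
        omega
  refine ⟨c, hcycle, by simp [c, hlen], fun x hx => Set.insert_subset_insert
    (Set.image_mono (Set.Icc_subset_Iic_self.trans (Set.Iic_subset_Iic.2 hjp))) (hcsupp x hx),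
    fun e he => mem_cycleChords_cases c hcsupp (by simp [c]) (by simp [c])
      (fun k hik hkj => by simp [c, hedges k hik hkj]) he⟩

theorem shortcut (hP : G.IsIndexedPath p v) {t : ℕ} (ht : 0 < t) (htp : t < p)
    (hchord : G.Adj (v (t - 1)) (v (t + 1))) : G.IsIndexedPath (p - 1) (dropIndex v t) where
  injOn k hk l hl hkl := by
    simp only [Set.mem_Iic] at hk hl
    simp only [dropIndex] at hkl
    split_ifs at hkl with h₁ h₂ h₂ <;>
      have := hP.injOn (Set.mem_Iic.2 (by omega)) (Set.mem_Iic.2 (by omega)) hkl <;> omega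
  adj k hk := by
    simp only [dropIndex]
    split_ifs with h₁ h₂ h₂
    · exact hP.adj k (by omega)
    · convert hchord using 2 <;> omega
    · omega
    · exact hP.adj (k + 1) (by omega)

theorem exists_cycle_shortcut (hP : G.IsIndexedPath p v) {z : V} (hz : ∀ k ≤ p, z ≠ v k)
    {t : ℕ} (hchord : G.Adj (v (t - 1)) (v (t + 1)))
    (hone : ∀ k l, G.IsPathChord p v k l → k = t - 1 ∧ l = t + 1) {i j : ℕ}
    (hit : i + 1 ≤ t) (htj : t + 1 ≤ j) (hjp : j ≤ p) (hzi : G.Adj z (v i))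
    (hzj : G.Adj z (v j)) :
    ∃ c : G.Walk z z, c.IsCycle ∧ c.length = j - i + 1 ∧
      (∀ x ∈ c.support, x ∈ insert z (v '' Set.Iic p)) ∧
      ∀ e ∈ G.cycleChords c, ∃ m, i < m ∧ m < j ∧ m ≠ t ∧ G.Adj z (v m) ∧ e = s(z, v m) := by
  have hw := hP.shortcut (by omega) (by omega) hchord
  have hzw : ∀ k ≤ p - 1, z ≠ dropIndex v t k := by
    intro k hk
    unfold dropIndex
    split_ifs <;> exact hz _ (by omega)
  have hzi' : G.Adj z (dropIndex v t i) := by rwa [dropIndex, if_pos (by omega)]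
  have hzj' : G.Adj z (dropIndex v t (j - 1)) := by
    rwa [dropIndex, if_neg (by omega), Nat.sub_add_cancel (by omega)]
  obtain ⟨c, hc, hlen, hsupp, hchords⟩ := hw.exists_cycle hzw (by omega) (by omega) hzi' hzj'
  refine ⟨c, hc, by omega, fun x hx => ?_, fun e he => ?_⟩
  · rcases hsupp x hx with rfl | ⟨k, hk, rfl⟩
    · exact Set.mem_insert _ _
    · rw [Set.mem_Iic] at hk
      refine Set.mem_insert_of_mem _ ?_
      unfold dropIndex
      split_ifs
      exacts [⟨k, Set.mem_Iic.2 (by omega), rfl⟩, ⟨k + 1, Set.mem_Iic.2 (by omega), rfl⟩]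
  · rcases hchords e he with ⟨m, him, hmj, hzm, rfl⟩ | ⟨k, l, -, hkl, -⟩
    · unfold dropIndex at hzm ⊢
      split_ifs at hzm ⊢
      exacts [⟨m, by omega, by omega, by omega, hzm, rfl⟩,
        ⟨m + 1, by omega, by omega, by omega, hzm, rfl⟩]
    · exact absurd (hkl.mono (by omega)) (not_isPathChord_dropIndex hone)

theorem hasMeynielObstructionIn_of_no_interior_adj (hP : G.IsIndexedPath p v) {z : V}
    (hz : ∀ k ≤ p, z ≠ v k)
    (huniq : ∀ k l k' l', G.IsPathChord p v k l → G.IsPathChord p v k' l' → k = k' ∧ l = l')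
    {i j : ℕ} (hij : 3 ≤ j - i) (hodd : Odd (j - i)) (hjp : j ≤ p) (hzi : G.Adj z (v i))
    (hzj : G.Adj z (v j)) (hgap : ∀ m, i < m → m < j → ¬ G.Adj z (v m)) :
    G.HasMeynielObstructionIn (insert z (v '' Set.Iic p)) := by
  obtain ⟨c, hc, hlen, hsupp, hchords⟩ := hP.exists_cycle hz (by omega) hjp hzi hzj
  have hpath : ∀ e ∈ G.cycleChords c, ∃ k l, G.IsPathChord p v k l ∧ e = s(v k, v l) := by
    intro e he
    rcases hchords e he with ⟨m, him, hmj, hzm, -⟩ | ⟨k, l, -, hkl, rfl⟩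
    · exact absurd hzm (hgap m him hmj)
    · exact ⟨k, l, hkl.mono hjp, rfl⟩
  refine .of_cycle c hc (by rw [hlen]; exact hodd.add_even even_two) (by omega) ?_ hsupp
  intro e he e' he'
  obtain ⟨k, l, hkl, rfl⟩ := hpath e he
  obtain ⟨k', l', hkl', rfl⟩ := hpath e' he'
  obtain ⟨rfl, rfl⟩ := huniq k l k' l' hkl hkl'
  rfl

theorem hasMeynielObstructionIn_of_no_chord_between (hP : G.IsIndexedPath p v) {z : V}
    (hz : ∀ k ≤ p, z ≠ v k) {i j m₀ : ℕ} (hij : 3 ≤ j - i) (hodd : Odd (j - i)) (hjp : j ≤ p)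
    (hzi : G.Adj z (v i)) (hzj : G.Adj z (v j))
    (hnbr : ∀ m, i < m → m < j → G.Adj z (v m) → m = m₀)
    (hnochord : ∀ k l, i ≤ k → ¬ G.IsPathChord j v k l) :
    G.HasMeynielObstructionIn (insert z (v '' Set.Iic p)) := by
  obtain ⟨c, hc, hlen, hsupp, hchords⟩ := hP.exists_cycle hz (by omega) hjp hzi hzj
  have hapex : ∀ e ∈ G.cycleChords c, e = s(z, v m₀) := by
    intro e he
    rcases hchords e he with ⟨m, him, hmj, hzm, rfl⟩ | ⟨k, l, hik, hkl, -⟩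
    · rw [hnbr m him hmj hzm]
    · exact absurd hkl (hnochord k l hik)
  refine .of_cycle c hc (by rw [hlen]; exact hodd.add_even even_two) (by omega) ?_ hsupp
  intro e he e' he'
  rw [hapex e he, hapex e' he']

theorem hasMeynielObstructionIn_of_chord_between (hP : G.IsIndexedPath p v) {z : V}
    (hz : ∀ k ≤ p, z ≠ v k) {t : ℕ} (hchord : G.Adj (v (t - 1)) (v (t + 1)))
    (hone : ∀ k l, G.IsPathChord p v k l → k = t - 1 ∧ l = t + 1) {i j m₀ : ℕ}
    (hit : i + 1 ≤ t) (htj : t + 1 ≤ j) (hjp : j ≤ p) (hij : 4 ≤ j - i) (heven : Even (j - i))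
    (hzi : G.Adj z (v i)) (hzj : G.Adj z (v j))
    (hnbr : ∀ m, i < m → m < j → m ≠ t → G.Adj z (v m) → m = m₀) :
    G.HasMeynielObstructionIn (insert z (v '' Set.Iic p)) := by
  obtain ⟨c, hc, hlen, hsupp, hchords⟩ :=
    hP.exists_cycle_shortcut hz hchord hone hit htj hjp hzi hzj
  have hapex : ∀ e ∈ G.cycleChords c, e = s(z, v m₀) := by
    intro e he
    obtain ⟨m, him, hmj, hmt, hzm, rfl⟩ := hchords e he
    rw [hnbr m him hmj hmt hzm]
  refine .of_cycle c hc (by rw [hlen]; exact heven.add_one) (by omega) ?_ hsupp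
  intro e he e' he'
  rw [hapex e he, hapex e' he']

theorem hasMeynielObstructionIn_of_triangle_at_chord (hP : G.IsIndexedPath p v) {z : V}
    (hz : ∀ k ≤ p, z ≠ v k)
    (huniq : ∀ k l k' l', G.IsPathChord p v k l → G.IsPathChord p v k' l' → k = k' ∧ l = l')
    {a₂ a : ℕ} (hchord : G.Adj (v (a - 1)) (v (a + 1)))
    (hone : ∀ k l, G.IsPathChord p v k l → k = a - 1 ∧ l = a + 1) (ha₂a : a₂ + 2 ≤ a)
    (ha₂ : Even a₂) (ha : Even a) (hap : a + 2 ≤ p) (hzp : G.Adj z (v p))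
    (hza₂ : G.Adj z (v a₂)) (hza : G.Adj z (v a)) (hza' : G.Adj z (v (a + 1)))
    (hgap : ∀ m, a₂ < m → m < a → ¬ G.Adj z (v m)) :
    G.HasMeynielObstructionIn (insert z (v '' Set.Iic p)) := by
  rw [Nat.even_iff] at ha₂ ha
  obtain ⟨c, hac, hcp, hzc, hcfirst⟩ :=
    Nat.exists_first_ge (P := fun k => G.Adj z (v k)) hap hzp
  rcases (show c = a + 2 ∨ (c % 2 = 1 ∧ a + 3 ≤ c) ∨ (c % 2 = 0 ∧ a + 4 ≤ c) by omega)
    with rfl | ⟨hc, hac⟩ | ⟨hc, hac⟩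
  · refine hP.hasMeynielObstructionIn_of_chord_between hz hchord hone (m₀ := a + 1)
      (by omega) (by omega) hcp (by omega) (Nat.even_iff.2 (by omega)) hza₂ hzc
      (fun m ha₂m hmc hma hzm => ?_)
    by_contra
    exact hgap m ha₂m (by omega) hzm
  · refine hP.hasMeynielObstructionIn_of_no_chord_between hz (m₀ := a + 1) (by omega)
      (Nat.odd_iff.2 (by omega)) hcp hza hzc (fun m ham hmc hzm => ?_)
      (fun k l hak hkl => ?_)
    · by_contra
      exact hcfirst m (by omega) hmc hzm
    · have := hone k l (hkl.mono hcp)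
      omega
  · exact hP.hasMeynielObstructionIn_of_no_interior_adj hz huniq (by omega)
      (Nat.odd_iff.2 (by omega)) hcp hza' hzc
      (fun m ham hmc => hcfirst m (by omega) hmc)

theorem hasMeynielObstructionIn_of_triangle (hP : G.IsIndexedPath p v) {z : V}
    (hz : ∀ k ≤ p, z ≠ v k) (hp : Odd p)
    (hform : ∀ k l, G.IsPathChord p v k l → ∃ t, 0 < t ∧ t < p - 1 ∧ k = t - 1 ∧ l = t + 1)
    (huniq : ∀ k l k' l', G.IsPathChord p v k l → G.IsPathChord p v k' l' → k = k' ∧ l = l')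
    (h02 : ¬ G.Adj (v 0) (v 2)) (hz0 : G.Adj z (v 0)) (hzp : G.Adj z (v p)) {a : ℕ}
    (ha : 0 < a) (hap : a + 1 ≤ p) (hza : G.Adj z (v a)) (hza' : G.Adj z (v (a + 1)))
    (heven : ∀ k ≤ a, G.Adj z (v k) → Even k) :
    G.HasMeynielObstructionIn (insert z (v '' Set.Iic p)) := by
  obtain ⟨a₂, -, ha₂a, hza₂, ha₂last⟩ :=
    Nat.exists_last_lt (P := fun k => G.Adj z (v k)) ha hz0
  have ha₂ := Nat.even_iff.1 (heven a₂ ha₂a.le hza₂)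
  have ha' := Nat.even_iff.1 (heven a le_rfl hza)
  by_cases hchord : ∃ k l, a₂ ≤ k ∧ G.IsPathChord (a + 1) v k l
  swap
  · push Not at hchord
    refine hP.hasMeynielObstructionIn_of_no_chord_between hz (m₀ := a) (by omega)
      (Nat.odd_iff.2 (by omega)) hap hza₂ hza' (fun m ha₂m hma hzm => ?_) hchord
    by_contra
    exact ha₂last m ha₂m (by omega) hzm
  obtain ⟨k, l, hk, hkl⟩ := hchord
  obtain ⟨t, ht0, htp, rfl, rfl⟩ := hform _ _ (hkl.mono hap)
  have hone : ∀ k l, G.IsPathChord p v k l → k = t - 1 ∧ l = t + 1 :=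
    fun k l h => huniq k l _ _ h (hkl.mono hap)
  have ht2 : 2 ≤ t := by
    by_contra
    obtain rfl : t = 1 := by omega
    exact h02 hkl.2.2
  rcases (show t < a ∨ t = a by have := hkl.2.1; omega) with hta | rfl
  · -- Between the last neighbour `v i` of `z` with `i ≤ a - 4` and `v a`, the only possible
    -- neighbour of `z` other than the bypassed `v t` is `v (a - 2)`: the others have odd index.
    obtain ⟨i, -, hia, hzi, hilast⟩ :=
      Nat.exists_last_lt (P := fun k => G.Adj z (v k)) (by omega : 0 < a - 3) hz0
    have hi := Nat.even_iff.1 (heven i (by omega) hzi)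
    have hia₂ : i ≤ a₂ := by
      by_contra
      exact ha₂last i (by omega) (by omega) hzi
    refine hP.hasMeynielObstructionIn_of_chord_between hz hkl.2.2 hone (m₀ := a - 2) (by omega)
      (by omega) (by omega) (by omega) (Nat.even_iff.2 (by omega)) hzi hza
      (fun m him hma hmt hzm => ?_)
    have := Nat.even_iff.1 (heven m (by omega) hzm)
    by_contra
    exact hilast m him (by omega) hzm
  · rw [Nat.odd_iff] at hp
    exact hP.hasMeynielObstructionIn_of_triangle_at_chord hz huniq hkl.2.2 hone (by omega)
      (Nat.even_iff.2 ha₂) (Nat.even_iff.2 ha') (by omega) hzp hza₂ hza hza' ha₂last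

theorem hasMeynielObstructionIn_of_not_adj_one (hP : G.IsIndexedPath p v) {z : V}
    (hz : ∀ k ≤ p, z ≠ v k) (hp : Odd p)
    (hform : ∀ k l, G.IsPathChord p v k l → ∃ t, 0 < t ∧ t < p - 1 ∧ k = t - 1 ∧ l = t + 1)
    (huniq : ∀ k l k' l', G.IsPathChord p v k l → G.IsPathChord p v k' l' → k = k' ∧ l = l')
    (h02 : ¬ G.Adj (v 0) (v 2)) (hz0 : G.Adj z (v 0)) (hzp : G.Adj z (v p))
    (hz1 : ¬ G.Adj z (v 1)) :
    G.HasMeynielObstructionIn (insert z (v '' Set.Iic p)) := by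
  obtain ⟨b, -, hbp, ⟨hb, hzb⟩, hbfirst⟩ :=
    Nat.exists_first_ge (P := fun k => Odd k ∧ G.Adj z (v k)) (Nat.zero_le p) ⟨hp, hzp⟩
  have heven : ∀ k < b, G.Adj z (v k) → Even k := fun k hkb hzk =>
    Nat.not_odd_iff_even.1 fun hk => hbfirst k k.zero_le hkb ⟨hk, hzk⟩
  rw [Nat.odd_iff] at hb
  have hb1 : b ≠ 1 := by rintro rfl; exact hz1 hzb
  obtain ⟨a, -, hab, hza, halast⟩ :=
    Nat.exists_last_lt (P := fun k => G.Adj z (v k)) (by omega : 0 < b) hz0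
  have ha := Nat.even_iff.1 (heven a hab hza)
  by_cases hgap : a + 1 < b
  · exact hP.hasMeynielObstructionIn_of_no_interior_adj hz huniq (by omega)
      (Nat.odd_iff.2 (by omega)) hbp hza hzb halast
  obtain rfl : b = a + 1 := by omega
  exact hP.hasMeynielObstructionIn_of_triangle hz hp hform huniq h02 hz0 hzp (by omega) hbp hza
    hzb (fun k hka => heven k (by omega))

theorem hasMeynielObstructionIn_of_chord_zero_two (hP : G.IsIndexedPath p v) {z : V}
    (hz : ∀ k ≤ p, z ≠ v k)
    (huniq : ∀ k l k' l', G.IsPathChord p v k l → G.IsPathChord p v k' l' → k = k' ∧ l = l')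
    (hp : 2 ≤ p) (h02 : G.Adj (v 0) (v 2)) (hz0 : G.Adj z (v 0)) (hzp : G.Adj z (v p))
    (hz1 : ¬ G.Adj z (v 1)) (hz2 : ¬ G.Adj z (v 2)) :
    G.HasMeynielObstructionIn (insert z (v '' Set.Iic p)) := by
  obtain ⟨a, ha1, hap, hza, hafirst⟩ :=
    Nat.exists_first_ge (P := fun k => G.Adj z (v k)) (by omega : 1 ≤ p) hzp
  have ha3 : 3 ≤ a := by
    have : a ≠ 1 := by rintro rfl; exact hz1 hza
    have : a ≠ 2 := by rintro rfl; exact hz2 hza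
    omega
  have hgap : ∀ m, 0 < m → m < a → ¬ G.Adj z (v m) := hafirst
  rcases Nat.even_or_odd a with ha | ha
  · exact hP.hasMeynielObstructionIn_of_chord_between hz (t := 1) h02
      (fun k l h => huniq k l 0 2 h ⟨le_rfl, hp, h02⟩) (m₀ := 0) le_rfl (by omega) hap
      (by rw [Nat.even_iff] at ha; omega) (by simpa using ha) hz0 hza
      (fun m h0m hma _ hzm => absurd hzm (hgap m h0m hma))
  · exact hP.hasMeynielObstructionIn_of_no_interior_adj hz huniq (by omega) (by simpa using ha)
      hap hz0 hza hgap

theorem hasMeynielObstructionIn_of_chord_one_three (hP : G.IsIndexedPath p v) {z : V}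
    (hz : ∀ k ≤ p, z ≠ v k)
    (huniq : ∀ k l k' l', G.IsPathChord p v k l → G.IsPathChord p v k' l' → k = k' ∧ l = l')
    (hp : 3 ≤ p) (h13 : G.Adj (v 1) (v 3)) (hz0 : G.Adj z (v 0)) (hzp : G.Adj z (v p))
    (hz1 : G.Adj z (v 1)) (hz3 : ¬ G.Adj z (v 3)) :
    G.HasMeynielObstructionIn (insert z (v '' Set.Iic p)) := by
  obtain ⟨m, hm3, hmp, hzm, hmfirst⟩ :=
    Nat.exists_first_ge (P := fun k => G.Adj z (v k)) hp hzp
  have hm4 : 4 ≤ m := by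
    have : m ≠ 3 := by rintro rfl; exact hz3 hzm
    omega
  have hone : ∀ k l, G.IsPathChord p v k l → k = 2 - 1 ∧ l = 2 + 1 :=
    fun k l h => huniq k l 1 3 h ⟨le_rfl, hp, h13⟩
  rcases Nat.even_or_odd m with hm | hm
  · refine hP.hasMeynielObstructionIn_of_chord_between hz h13 hone (m₀ := 1) (by omega)
      (by omega) hmp (by omega) (by simpa using hm) hz0 hzm (fun k h0k hkm hk2 hzk => ?_)
    by_contra
    exact hmfirst k (by omega) hkm hzk
  · refine hP.hasMeynielObstructionIn_of_chord_between hz h13 hone (m₀ := 1) le_rfl (by omega)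
      hmp (by rw [Nat.odd_iff] at hm; omega) (Nat.Odd.sub_odd hm odd_one) hz1 hzm
      (fun k h1k hkm hk2 hzk => absurd hzk (hmfirst k (by omega) hkm))

theorem hasMeynielObstructionIn_of_adj_one_of_not_adj_two (hP : G.IsIndexedPath p v) {z : V}
    (hz : ∀ k ≤ p, z ≠ v k)
    (hform : ∀ k l, G.IsPathChord p v k l → ∃ t, 0 < t ∧ t < p - 1 ∧ k = t - 1 ∧ l = t + 1)
    (huniq : ∀ k l k' l', G.IsPathChord p v k l → G.IsPathChord p v k' l' → k = k' ∧ l = l')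
    (hp : 2 ≤ p) (h02 : ¬ G.Adj (v 0) (v 2)) (h13 : ¬ G.Adj (v 1) (v 3))
    (hz0 : G.Adj z (v 0)) (hzp : G.Adj z (v p)) (hz1 : G.Adj z (v 1)) (hz2 : ¬ G.Adj z (v 2)) :
    G.HasMeynielObstructionIn (insert z (v '' Set.Iic p)) := by
  obtain ⟨j, hj2, hjp, hzj, hjfirst⟩ :=
    Nat.exists_first_ge (P := fun k => G.Adj z (v k)) hp hzp
  have hj3 : 3 ≤ j := by
    have : j ≠ 2 := by rintro rfl; exact hz2 hzj
    omega
  rcases Nat.even_or_odd j with hj | hj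
  · rw [Nat.even_iff] at hj
    exact hP.hasMeynielObstructionIn_of_no_interior_adj hz huniq (by omega)
      (Nat.odd_iff.2 (by omega)) hjp hz1 hzj (fun m h1m hmj => hjfirst m (by omega) hmj)
  by_cases hchord : ∃ k l, G.IsPathChord j v k l
  · obtain ⟨k, l, hkl⟩ := hchord
    obtain ⟨t, ht0, htp, rfl, rfl⟩ := hform _ _ (hkl.mono hjp)
    have ht3 : 3 ≤ t := by
      by_contra
      obtain rfl | rfl : t = 1 ∨ t = 2 := by omega
      exacts [h02 hkl.2.2, h13 hkl.2.2]
    rw [Nat.odd_iff] at hj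
    exact hP.hasMeynielObstructionIn_of_chord_between hz hkl.2.2
      (fun k l h => huniq k l _ _ h (hkl.mono hjp)) (m₀ := 1) (by omega) hkl.2.1 hjp
      (by have := hkl.2.1; omega) (Nat.even_iff.2 (by omega)) hz1 hzj
      (fun m h1m hmj _ hzm => absurd hzm (hjfirst m (by omega) hmj))
  · push Not at hchord
    refine hP.hasMeynielObstructionIn_of_no_chord_between hz (m₀ := 1) (by omega)
      (by simpa using hj) hjp hz0 hzj (fun m h0m hmj hzm => ?_) (fun k l _ => hchord k l)
    by_contra
    exact hjfirst m (by omega) hmj hzm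

end IsIndexedPath

end SimpleGraph

theorem nearObstruction_hasMeynielObstruction_general {V : Type*}
    (G : SimpleGraph V) (p : ℕ) (v : ℕ → V) (z : V)
    (h : G.IsNearObstruction p v z) :
    ∃ (u : V) (c : G.Walk u u), c.IsCycle ∧ Odd c.length ∧ 5 ≤ c.length ∧
      (G.cycleChords c).ncard ≤ 1 ∧
      ∀ x ∈ c.support, x ∈ insert z (v '' Set.Iic p) := by
  obtain ⟨hp, hp3, hinj, hadj, hform, huniq, hz, hz0, hzp, htype⟩ := h
  have hP : G.IsIndexedPath p v := ⟨hinj, hadj⟩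
  rcases htype with ⟨h02, hz1, hz2⟩ | ⟨h13, hz13⟩ | ⟨h02, hz1⟩ | ⟨h02, h13, hz1, hz2⟩
  · exact hP.hasMeynielObstructionIn_of_chord_zero_two hz huniq (by omega) h02 hz0 hzp hz1 hz2
  · by_cases hz1 : G.Adj z (v 1)
    · exact hP.hasMeynielObstructionIn_of_chord_one_three hz huniq hp3 h13 hz0 hzp hz1
        (hz13.resolve_left (not_not.2 hz1))
    · refine hP.hasMeynielObstructionIn_of_not_adj_one hz hp hform huniq (fun h02 => ?_) hz0 hzp hz1
      have := huniq 0 2 1 3 ⟨le_rfl, by omega, h02⟩ ⟨le_rfl, hp3, h13⟩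
      omega
  · exact hP.hasMeynielObstructionIn_of_not_adj_one hz hp hform huniq h02 hz0 hzp hz1
  · exact hP.hasMeynielObstructionIn_of_adj_one_of_not_adj_two hz hform huniq (by omega) h02 h13
      hz0 hzp hz1 hz2

/-- If `G` has a near-obstruction `(P, z)`, then `G` has a Meyniel obstruction
contained in the subgraph induced by the vertices of `P` together with `z`. -/
theorem nearObstruction_hasMeynielObstruction {V : Type*} [Fintype V]
    (G : SimpleGraph V) (p : ℕ) (v : ℕ → V) (z : V)
    (h : G.IsNearObstruction p v z) :
    ∃ (u : V) (c : G.Walk u u), c.IsCycle ∧ Odd c.length ∧ 5 ≤ c.length ∧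
      (G.cycleChords c).ncard ≤ 1 ∧
      ∀ x ∈ c.support, x ∈ insert z (v '' Set.Iic p) :=
  nearObstruction_hasMeynielObstruction_general G p v z h
end

section
/- Let G be a finite simple graph and let (P, z) be a near-obstruction in G with P = v_0-v_1-v_2-v_3 a path on four vertices (p = 3). Then the five vertices v_0, v_1, v_2, v_3, z induce a Meyniel obstruction in G, namely an odd cycle of length five with at most one chord. -/
open SimpleGraph

set_option maxHeartbeats 2000000 in
lemma aux {V : Type*} (G : SimpleGraph V) (v0 v1 v2 v3 z : V)
    (h01 : G.Adj v0 v1) (h12 : G.Adj v1 v2) (h23 : G.Adj v2 v3)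
    (hz0 : G.Adj z v0) (hz3 : G.Adj z v3)
    (n02 : v0 ≠ v2) (n03 : v0 ≠ v3) (n13 : v1 ≠ v3)
    (nz1 : z ≠ v1) (nz2 : z ≠ v2)
    (h03 : ¬ G.Adj v0 v3) (h13 : ¬ G.Adj v1 v3)
    (e0 : Sym2 V)
    (c02 : G.Adj v0 v2 → s(v0, v2) = e0)
    (cz1 : G.Adj z v1 → s(z, v1) = e0)
    (cz2 : G.Adj z v2 → s(z, v2) = e0) :
    ∃ (u : V) (c : G.Walk u u), c.IsCycle ∧ c.length = 5 ∧ Odd c.length ∧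
      (G.cycleChords c).ncard ≤ 1 ∧
      {x | x ∈ c.support} = {v0, v1, v2, v3, z} := by
  have n01 := h01.ne
  have n12 := h12.ne
  have n23 := h23.ne
  have nz0 := hz0.ne
  have nz3 := hz3.ne
  refine ⟨z, .cons hz0 (.cons h01 (.cons h12 (.cons h23 (.cons hz3.symm .nil)))), ?_, rfl, ⟨2, rfl⟩, ?_, ?_⟩
  · constructor
    · constructor
      · simp [Walk.isTrail_def, Sym2.eq_iff]
        aesop
      · simp
    · simp [List.nodup_cons]
      aesop
  · have hsub : G.cycleChords (.cons hz0 (.cons h01 (.cons h12 (.cons h23 (.cons hz3.symm (.nil : G.Walk z z)))))) ⊆ {e0} := by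
      rintro e ⟨hE, hsup, hnot⟩
      induction e using Sym2.inductionOn with
      | hf x y =>
        have hx := hsup x (by simp)
        have hy := hsup y (by simp)
        simp only [Walk.support_cons, Walk.support_nil, List.mem_cons, List.not_mem_nil, or_false] at hx hy
        simp only [Walk.edges_cons, Walk.edges_nil, List.mem_cons, List.not_mem_nil, or_false, not_or, Sym2.eq_iff] at hnot
        rw [mem_edgeSet] at hE
        simp only [Set.mem_singleton_iff]
        clear hsup
        rcases hx with rfl|rfl|rfl|rfl|rfl|rfl <;> rcases hy with rfl|rfl|rfl|rfl|rfl|rfl <;>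
          first
          | exact absurd rfl hE.ne
          | exact (hnot.1.1 ⟨rfl, rfl⟩).elim
          | exact (hnot.1.2 ⟨rfl, rfl⟩).elim
          | exact (hnot.2.1.1 ⟨rfl, rfl⟩).elim
          | exact (hnot.2.1.2 ⟨rfl, rfl⟩).elim
          | exact (hnot.2.2.1.1 ⟨rfl, rfl⟩).elim
          | exact (hnot.2.2.1.2 ⟨rfl, rfl⟩).elim
          | exact (hnot.2.2.2.1.1 ⟨rfl, rfl⟩).elim
          | exact (hnot.2.2.2.1.2 ⟨rfl, rfl⟩).elim
          | exact (hnot.2.2.2.2.1 ⟨rfl, rfl⟩).elim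
          | exact (hnot.2.2.2.2.2 ⟨rfl, rfl⟩).elim
          | exact absurd hE h03 | exact absurd hE.symm h03
          | exact absurd hE h13 | exact absurd hE.symm h13
          | exact c02 hE | exact (Sym2.eq_swap.trans (c02 hE.symm))
          | exact cz1 hE | exact (Sym2.eq_swap.trans (cz1 hE.symm))
          | exact cz2 hE | exact (Sym2.eq_swap.trans (cz2 hE.symm))
    calc (G.cycleChords _).ncard ≤ ({e0} : Set (Sym2 V)).ncard :=
          Set.ncard_le_ncard hsub (Set.finite_singleton _)
      _ = 1 := Set.ncard_singleton _
  · ext x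
    simp [Set.mem_insert_iff]
    tauto

/-- If `(P, z)` is a near-obstruction with `P = v 0 - v 1 - v 2 - v 3` a path on
four vertices (`p = 3`), then the five vertices `v 0, v 1, v 2, v 3, z` induce a
Meyniel obstruction: an odd cycle of length five with at most one chord. -/
theorem nearObstruction_p3_inducesMeynielObstruction {V : Type*} [Fintype V]
    (G : SimpleGraph V) (v : ℕ → V) (z : V)
    (h : G.IsNearObstruction 3 v z) :
    ∃ (u : V) (c : G.Walk u u), c.IsCycle ∧ c.length = 5 ∧ Odd c.length ∧
      (G.cycleChords c).ncard ≤ 1 ∧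
      {x | x ∈ c.support} = {v 0, v 1, v 2, v 3, z} := by
  obtain ⟨-, -, hinj, hadj, hform, -, hz, hz0, hz3, htype⟩ := h
  have h01 := hadj 0 (by norm_num)
  have h12 := hadj 1 (by norm_num)
  have h23 := hadj 2 (by norm_num)
  have n02 : v 0 ≠ v 2 := fun e => by
    have := hinj (by simp : (0:ℕ) ∈ Set.Iic 3) (by simp : (2:ℕ) ∈ Set.Iic 3) e; omega
  have n03 : v 0 ≠ v 3 := fun e => by
    have := hinj (by simp : (0:ℕ) ∈ Set.Iic 3) (by simp : (3:ℕ) ∈ Set.Iic 3) e; omega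
  have n13 : v 1 ≠ v 3 := fun e => by
    have := hinj (by simp : (1:ℕ) ∈ Set.Iic 3) (by simp : (3:ℕ) ∈ Set.Iic 3) e; omega
  have h03 : ¬ G.Adj (v 0) (v 3) := fun hA => by
    obtain ⟨t, ht1, ht2, ht3, ht4⟩ := hform 0 3 ⟨by norm_num, le_refl _, hA⟩
    omega
  have h13 : ¬ G.Adj (v 1) (v 3) := fun hA => by
    obtain ⟨t, ht1, ht2, ht3, ht4⟩ := hform 1 3 ⟨by norm_num, le_refl _, hA⟩
    omega
  have goalFromE := aux G (v 0) (v 1) (v 2) (v 3) z h01 h12 h23 hz0 hz3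
    n02 n03 n13 (hz 1 (by norm_num)) (hz 2 (by norm_num)) h03 h13
  have key : ∃ (u : V) (c : G.Walk u u), c.IsCycle ∧ c.length = 5 ∧ Odd c.length ∧
      (G.cycleChords c).ncard ≤ 1 ∧
      {x | x ∈ c.support} = {v 0, v 1, v 2, v 3, z} := by
    rcases htype with ⟨h02, hn1, hn2⟩ | ⟨h13', -⟩ | ⟨h02, hn1⟩ | ⟨h02, -, hA1, hn2⟩
    · exact goalFromE s(v 0, v 2) (fun _ => rfl) (fun hA => absurd hA hn1)
        (fun hA => absurd hA hn2)
    · exact absurd h13' h13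
    · exact goalFromE s(z, v 2) (fun hA => absurd hA h02) (fun hA => absurd hA hn1)
        (fun _ => rfl)
    · exact goalFromE s(z, v 1) (fun hA => absurd hA h02) (fun _ => rfl)
        (fun hA => absurd hA hn2)
  exact key
end

section
/- Let G be a finite simple graph, let P = v_0-v_1-…-v_p be a path of G with p odd, p ≥ 3, such that P has at most one chord, any chord of P is of the form v_{t-1}v_{t+1} with 0 < t < p-1, and v_0v_2 is not a chord of P. Let z be a vertex not on P adjacent to v_0 and v_p but not adjacent to v_1 (a near-obstruction of Type 3), and let r be the smallest integer such that z is adjacent to v_r (so r ≥ 2). If r is odd, then z, v_0, v_1, …, v_r induce an odd cycle of length at least five with at most one chord, i.e., a Meyniel obstruction in G. -/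
/-
The cycle `z - v 0 - v 1 - ⋯ - v r - z` has length `r + 2`, which is odd and at least five
because `r` is odd and `r ≠ 1` (`z` is not adjacent to `v 1`). By minimality of `r`, the only
neighbours of `z` on the cycle are `v 0` and `v r`, so every chord of the cycle joins two
vertices at distance at least two along the path `P = v 0 - ⋯ - v p`, i.e. it is a chord of
`P`; and `P` has at most one chord.
-/

open SimpleGraph

namespace SimpleGraph

variable {V : Type*} (G : SimpleGraph V) (v : ℕ → V)

def pathWalk : ∀ n, (∀ i, i < n → G.Adj (v i) (v (i + 1))) → G.Walk (v 0) (v n)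
  | 0, _ => Walk.nil
  | n + 1, h =>
    (pathWalk n (fun i hi => h i (Nat.lt_succ_of_lt hi))).concat (h n (Nat.lt_succ_self n))

variable {G v}

theorem pathWalk_support :
    ∀ n (h : ∀ i, i < n → G.Adj (v i) (v (i + 1))),
      (pathWalk G v n h).support = (List.range (n + 1)).map v
  | 0, _ => by simp [pathWalk]
  | n + 1, h => by
    rw [pathWalk, Walk.support_concat, pathWalk_support n, List.range_succ (n := n + 1)]
    simp

theorem pathWalk_edges :
    ∀ n (h : ∀ i, i < n → G.Adj (v i) (v (i + 1))),
      (pathWalk G v n h).edges = (List.range n).map (fun i => s(v i, v (i + 1)))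
  | 0, _ => by simp [pathWalk]
  | n + 1, h => by
    rw [pathWalk, Walk.edges_concat, pathWalk_edges n, List.range_succ]
    simp

theorem pathWalk_length :
    ∀ n (h : ∀ i, i < n → G.Adj (v i) (v (i + 1))), (pathWalk G v n h).length = n
  | 0, _ => rfl
  | n + 1, h => by rw [pathWalk, Walk.length_concat, pathWalk_length n]

theorem pathWalk_isPath {n : ℕ} (h : ∀ i, i < n → G.Adj (v i) (v (i + 1)))
    (hinj : Set.InjOn v (Set.Iic n)) : (pathWalk G v n h).IsPath := by
  refine Walk.IsPath.mk' ?_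
  rw [pathWalk_support]
  refine List.nodup_range.map_on fun i hi j hj hij => hinj ?_ ?_ hij
  · simpa [Nat.lt_succ_iff] using hi
  · simpa [Nat.lt_succ_iff] using hj

variable {z : V} {n : ℕ} (h : ∀ i, i < n → G.Adj (v i) (v (i + 1)))
  (hz0 : G.Adj z (v 0)) (hzn : G.Adj z (v n))

def pathCycle : G.Walk z z := Walk.cons hz0 ((pathWalk G v n h).concat hzn.symm)

theorem pathCycle_length : (pathCycle h hz0 hzn).length = n + 2 := by
  simp only [pathCycle, Walk.length_cons, Walk.length_concat, pathWalk_length]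

theorem mem_support_pathCycle {x : V} :
    x ∈ (pathCycle h hz0 hzn).support ↔ x = z ∨ ∃ i ≤ n, v i = x := by
  simp only [pathCycle, Walk.support_cons, Walk.support_concat, pathWalk_support,
    List.mem_cons, List.mem_append, List.mem_map, List.mem_range, Nat.lt_succ_iff,
    List.not_mem_nil, or_false]
  rw [or_left_comm, or_self, or_comm]

theorem pathCycle_edges : (pathCycle h hz0 hzn).edges =
    s(z, v 0) :: ((List.range n).map (fun i => s(v i, v (i + 1))) ++ [s(v n, z)]) := by
  rw [pathCycle, Walk.edges_cons, Walk.edges_concat, pathWalk_edges, List.concat_eq_append]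

theorem pathCycle_isCycle (hn : 0 < n) (hinj : Set.InjOn v (Set.Iic n))
    (hz : ∀ i ≤ n, z ≠ v i) : (pathCycle h hz0 hzn).IsCycle := by
  rw [pathCycle, Walk.cons_isCycle_iff, Walk.edges_concat, pathWalk_edges]
  refine ⟨(pathWalk_isPath h hinj).concat ?_ _, ?_⟩
  · rw [pathWalk_support]
    simpa [Nat.lt_succ_iff, eq_comm] using hz
  · simp only [List.concat_eq_append, List.mem_append, List.mem_map, List.mem_range,
      List.mem_singleton, Sym2.eq_iff, not_or, not_exists, not_and]
    refine ⟨fun i hi => ⟨fun hvi _ => hz i hi.le hvi.symm, fun _ hvi => hz (i + 1) hi hvi.symm⟩,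
      fun hvz _ => hz n le_rfl hvz, fun _ hv0 => hn.ne ?_⟩
    exact hinj (Set.mem_Iic.2 (Nat.zero_le n)) (Set.mem_Iic.2 le_rfl) hv0

theorem exists_eq_of_mem_cycleChords_pathCycle (hmin : ∀ i, 0 < i → i < n → ¬ G.Adj z (v i))
    {e : Sym2 V} (he : e ∈ G.cycleChords (pathCycle h hz0 hzn)) :
    ∃ i j, i + 2 ≤ j ∧ j ≤ n ∧ G.Adj (v i) (v j) ∧ e = s(v i, v j) := by
  obtain ⟨hadj, hsupp, hnotEdge⟩ := he
  have hpathEdge : ∀ i < n, s(v i, v (i + 1)) ∈ (pathCycle h hz0 hzn).edges := fun i hi => by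
    simp only [pathCycle_edges, List.mem_cons, List.mem_append, List.mem_map, List.mem_range]
    exact Or.inr (Or.inl ⟨i, hi, rfl⟩)
  have hzEdge : ∀ i ≤ n, G.Adj z (v i) → s(z, v i) ∈ (pathCycle h hz0 hzn).edges := by
    intro i hi hzi
    obtain rfl | hi0 := Nat.eq_zero_or_pos i
    · simp [pathCycle_edges]
    obtain rfl | hin := hi.eq_or_lt
    · simp [pathCycle_edges, Sym2.eq_swap]
    · exact absurd hzi (hmin i hi0 hin)
  have hpathChord : ∀ i j, j ≤ n → i < j → G.Adj (v i) (v j) →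
      s(v i, v j) ∉ (pathCycle h hz0 hzn).edges →
      ∃ i' j', i' + 2 ≤ j' ∧ j' ≤ n ∧ G.Adj (v i') (v j') ∧ s(v i, v j) = s(v i', v j') := by
    intro i j hj hij hadjij hnotEdge
    obtain rfl | hij2 := (Nat.succ_le_of_lt hij).eq_or_lt
    · exact absurd (hpathEdge i hj) hnotEdge
    · exact ⟨i, j, hij2, hj, hadjij, rfl⟩
  induction e using Sym2.ind with
  | _ x y =>
  have hx := (mem_support_pathCycle h hz0 hzn).1 (hsupp x (Sym2.mem_mk_left x y))
  have hy := (mem_support_pathCycle h hz0 hzn).1 (hsupp y (Sym2.mem_mk_right x y))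
  rw [mem_edgeSet] at hadj
  rcases hx with rfl | ⟨i, hi, rfl⟩ <;> rcases hy with rfl | ⟨j, hj, rfl⟩
  · exact absurd hadj (G.irrefl)
  · exact absurd (hzEdge j hj hadj) hnotEdge
  · rw [Sym2.eq_swap] at hnotEdge
    exact absurd (hzEdge i hi hadj.symm) hnotEdge
  · obtain hij | hji := Nat.lt_or_gt_of_ne (G.ne_of_adj hadj |> mt (congrArg v))
    · exact hpathChord i j hj hij hadj hnotEdge
    · rw [Sym2.eq_swap] at hnotEdge ⊢
      exact hpathChord j i hi hji hadj.symm hnotEdge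

end SimpleGraph

theorem type3_nearObstruction_oddCase_meynielObstruction_general {V : Type*}
    (G : SimpleGraph V) (p : ℕ) (v : ℕ → V) (z : V) (r : ℕ)
    (hinj : Set.InjOn v (Set.Iic p))
    (hpath : ∀ i, i < p → G.Adj (v i) (v (i + 1)))
    (hone : ∀ i j i' j', G.IsPathChord p v i j → G.IsPathChord p v i' j' → i = i' ∧ j = j')
    (hz : ∀ i, i ≤ p → z ≠ v i)
    (hz0 : G.Adj z (v 0)) (hz1 : ¬ G.Adj z (v 1))
    (hrp : r ≤ p) (hzr : G.Adj z (v r))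
    (hrmin : ∀ i, 1 ≤ i → i < r → ¬ G.Adj z (v i))
    (hrodd : Odd r) :
    ∃ (u : V) (c : G.Walk u u), c.IsCycle ∧ Odd c.length ∧ 5 ≤ c.length ∧
      {x | x ∈ c.support} = insert z (v '' Set.Iic r) ∧
      (G.cycleChords c).ncard ≤ 1 := by
  have hr3 : 3 ≤ r := by
    obtain ⟨_ | k, rfl⟩ := hrodd
    · exact absurd hzr hz1
    · omega
  have hadj : ∀ i, i < r → G.Adj (v i) (v (i + 1)) := fun i hi => hpath i (hi.trans_le hrp)
  have hcycle := pathCycle_isCycle hadj hz0 hzr (by omega)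
    (hinj.mono (Set.Iic_subset_Iic.2 hrp)) fun i hi => hz i (hi.trans hrp)
  refine ⟨z, _, hcycle, ?_, ?_, ?_, ?_⟩
  · rw [pathCycle_length]
    exact hrodd.add_even even_two
  · rw [pathCycle_length]
    omega
  · ext x
    simp [mem_support_pathCycle]
  · have hchords : (G.cycleChords (pathCycle hadj hz0 hzr)).Subsingleton := by
      intro a ha b hb
      obtain ⟨i, j, hij, hj, hvij, rfl⟩ :=
        exists_eq_of_mem_cycleChords_pathCycle hadj hz0 hzr hrmin ha
      obtain ⟨i', j', hij', hj', hvij', rfl⟩ :=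
        exists_eq_of_mem_cycleChords_pathCycle hadj hz0 hzr hrmin hb
      obtain ⟨rfl, rfl⟩ :=
        hone i j i' j' ⟨hij, hj.trans hrp, hvij⟩ ⟨hij', hj'.trans hrp, hvij'⟩
      rfl
    exact (Set.ncard_le_one hchords.finite).2 hchords

/-- Near-obstruction of Type 3: `P = v 0 - ⋯ - v p` is a path with `p` odd, `p ≥ 3`,
with at most one chord, any chord being `v (t-1) v (t+1)` with `0 < t < p - 1`, and
`v 0 v 2` not a chord; `z` is a vertex off `P` adjacent to `v 0` and `v p` but not to
`v 1`.  If `r` is the smallest positive integer with `z` adjacent to `v r` and `r` is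
odd, then `z, v 0, v 1, …, v r` induce an odd cycle of length at least five with at
most one chord, i.e. a Meyniel obstruction in `G`. -/
theorem type3_nearObstruction_oddCase_meynielObstruction {V : Type*} [Fintype V]
    (G : SimpleGraph V) (p : ℕ) (v : ℕ → V) (z : V) (r : ℕ)
    (hodd : Odd p) (hp : 3 ≤ p) (hinj : Set.InjOn v (Set.Iic p))
    (hpath : ∀ i, i < p → G.Adj (v i) (v (i + 1)))
    (hshape : ∀ i j, G.IsPathChord p v i j → ∃ t, 0 < t ∧ t < p - 1 ∧ i = t - 1 ∧ j = t + 1)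
    (hone : ∀ i j i' j', G.IsPathChord p v i j → G.IsPathChord p v i' j' → i = i' ∧ j = j')
    (h02 : ¬ G.Adj (v 0) (v 2))
    (hz : ∀ i, i ≤ p → z ≠ v i)
    (hz0 : G.Adj z (v 0)) (hzp : G.Adj z (v p)) (hz1 : ¬ G.Adj z (v 1))
    (hr1 : 1 ≤ r) (hrp : r ≤ p) (hzr : G.Adj z (v r))
    (hrmin : ∀ i, 1 ≤ i → i < r → ¬ G.Adj z (v i))
    (hrodd : Odd r) :
    ∃ (u : V) (c : G.Walk u u), c.IsCycle ∧ Odd c.length ∧ 5 ≤ c.length ∧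
      {x | x ∈ c.support} = insert z (v '' Set.Iic r) ∧
      (G.cycleChords c).ncard ≤ 1 :=
  type3_nearObstruction_oddCase_meynielObstruction_general G p v z r hinj hpath hone hz hz0 hz1 hrp
    hzr hrmin hrodd
end

section
/- Let G be a finite simple graph, let P = v_0-v_1-…-v_p be a path of G with p odd, p ≥ 3, such that P has at most one chord, any chord of P is of the form v_{t-1}v_{t+1} with 0 < t < p-1, and neither v_0v_2 nor v_1v_3 is a chord of P. Let z be a vertex not on P adjacent to v_0, v_p and v_1 but not adjacent to v_2 (a near-obstruction of Type 4), and let r be the smallest integer with r ≥ 3 such that z is adjacent to v_r. Then the subgraph of G induced by {z, v_0, v_1, …, v_r} contains a Meyniel obstruction: if P has a chord v_{t-1}v_{t+1} with 2 < t < r, it is the cycle through z, v_1, …, v_r (an odd hole when r is odd, after deleting v_t; an odd cycle with only chord v_{t-1}v_{t+1} when r is even); otherwise, if r is odd then z, v_0, v_1, …, v_r induce an odd cycle whose only chord is zv_1, and if r is even then z, v_1, …, v_r induce a chordless odd cycle of length at least five. -/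
open SimpleGraph

/-!
Each cycle of the conclusion is `z, v i₁, …, v iₖ, z` for an increasing list of indices
`i₁ < ⋯ < iₖ` in `[0, r]`: all of `0, …, r`, all of `1, …, r`, or `1, …, r` without `t`, bridged
by the chord `v (t-1) v (t+1)`. Two of its vertices are consecutive on it exactly when their
indices are consecutive in the list, or when one is `z` and the other `v i₁` or `v iₖ`; so its
chords are read off from the edges inside `{z, v 0, …, v r}`. By the minimality of `r`, `z` sees
only `v 0`, `v 1` and `v r` there, and the only possible chord of the path is a single
`v i v (i+2)` with `i ≥ 2`. The three cycles have lengths `r + 2`, `r + 1` and `r`, and the parity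
of `r` decides which of them is odd.
-/

theorem List.Pairwise.pair_infix_iff {α : Type*} [LinearOrder α] {l : List α}
    (hl : l.Pairwise (· < ·)) {a b : α} :
    [a, b] <:+: l ↔ a ∈ l ∧ b ∈ l ∧ a < b ∧ ∀ c ∈ l, c ≤ a ∨ b ≤ c := by
  constructor
  · rintro ⟨s, t, rfl⟩
    simp only [List.append_assoc, List.cons_append, List.nil_append, List.pairwise_append,
      List.pairwise_cons, List.mem_cons] at hl
    obtain ⟨-, ⟨ha, hbt, -⟩, hs⟩ := hl
    refine ⟨by simp, by simp, ha b (.inl rfl), fun c hc => ?_⟩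
    simp only [List.append_assoc, List.cons_append, List.nil_append, List.mem_append,
      List.mem_cons] at hc
    rcases hc with hc | rfl | rfl | hc
    · exact .inl (hs c hc a (.inl rfl)).le
    · exact .inl le_rfl
    · exact .inr le_rfl
    · exact .inr (hbt c hc).le
  · rintro ⟨ha, hb, hab, hgap⟩
    obtain ⟨s, t, rfl⟩ := List.append_of_mem ha
    obtain ⟨-, hat, hsa⟩ := List.pairwise_append.1 hl
    have hbt : b ∈ t := by
      rcases List.mem_append.1 hb with hbs | hbt
      · exact absurd (hsa b hbs a List.mem_cons_self) hab.not_gt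
      · exact (List.mem_cons.1 hbt).resolve_left hab.ne'
    obtain ⟨b', t', rfl⟩ := List.exists_cons_of_ne_nil (List.ne_nil_of_mem hbt)
    obtain ⟨hab', hb't'⟩ := List.pairwise_cons.1 hat
    have hb' : b' = b := by
      rcases List.mem_cons.1 hbt with h | h
      · exact h.symm
      · rcases hgap b' (by simp) with h' | h'
        · exact absurd h' (hab' b' List.mem_cons_self).not_ge
        · exact absurd h' (List.rel_of_pairwise_cons hb't' h).not_ge
    subst hb'
    exact ⟨s, t', by simp⟩

theorem List.pair_infix_range'_iff {a n i j : ℕ} :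
    [i, j] <:+: List.range' a n ↔ a ≤ i ∧ j = i + 1 ∧ j < a + n := by
  rw [(List.pairwise_lt_range' (s := a) (n := n)).pair_infix_iff]
  simp only [List.mem_range'_1]
  constructor
  · rintro ⟨hi, hj, hij, hgap⟩
    have := hgap (i + 1)
    omega
  · rintro ⟨hi, rfl, hj⟩
    exact ⟨by omega, by omega, by omega, fun c _ => by omega⟩

theorem List.isChain_cons_map_append_singleton {α β : Type*} {R : β → β → Prop}
    {f : α → β} {z : β} {l : List α} {a b : α} (hhead : l.head? = some a)
    (hlast : l.getLast? = some b) (ha : R z (f a)) (hb : R (f b) z)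
    (hstep : ∀ i j, [i, j] <:+: l → R (f i) (f j)) :
    (z :: l.map f ++ [z]).IsChain R := by
  have hchain : (l.map f).IsChain R := by
    rw [List.isChain_map, List.isChain_iff_forall_rel_of_append_cons_cons]
    rintro i j l₁ l₂ rfl
    exact hstep i j ⟨l₁, l₂, by simp⟩
  simp [List.isChain_cons, List.isChain_append, List.head?_append, hhead, hlast, hchain, ha, hb,
    List.head?_map]

theorem List.setOf_mem_cons_map_append_singleton {α β : Type*} (z : β) (f : α → β)
    {l : List α} {S : Set α} (hS : ∀ i, i ∈ l ↔ i ∈ S) :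
    {x | x ∈ z :: l.map f ++ [z]} = insert z (f '' S) := by
  ext x
  simp [hS, or_comm]

namespace SimpleGraph

variable {V : Type*} {G : SimpleGraph V}

theorem Walk.exists_isCycle_support_eq {z : V} {l : List V}
    (hchain : (z :: l ++ [z]).IsChain G.Adj) (hnodup : (z :: l).Nodup) (hlen : 2 ≤ l.length) :
    ∃ c : G.Walk z z, c.IsCycle ∧ c.length = l.length + 1 ∧ c.support = z :: l ++ [z] := by
  let c : G.Walk z z :=
    (Walk.ofSupport (z :: l ++ [z]) (List.cons_ne_nil _ _) hchain).copy rfl (by simp)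
  have hsupp : c.support = z :: l ++ [z] :=
    (Walk.support_copy _ _ _).trans (Walk.support_ofSupport _ _)
  have hlen' : c.length = l.length + 1 := by
    rw [← Nat.add_right_cancel_iff (n := 1), ← Walk.length_support, hsupp]
    simp
  refine ⟨c, Walk.isCycle_iff_isPath_tail_and_le_length.2 ⟨?_, by omega⟩, hlen', hsupp⟩
  have hnil : ¬ c.Nil := by rw [← Walk.length_eq_zero_iff]; omega
  rw [Walk.isPath_def, Walk.support_tail_of_not_nil _ hnil, hsupp, List.cons_append,
    List.tail_cons, List.nodup_append_comm]
  exact hnodup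

variable {v : ℕ → V} {z : V} {L : List ℕ}

theorem exists_isCycle_support_eq_map {a b : ℕ} (hL : L.Nodup) (hinj : Set.InjOn v {i | i ∈ L})
    (hz : ∀ i ∈ L, z ≠ v i) (hlen : 2 ≤ L.length) (hhead : L.head? = some a)
    (hlast : L.getLast? = some b) (ha : G.Adj z (v a)) (hb : G.Adj (v b) z)
    (hstep : ∀ i j, [i, j] <:+: L → G.Adj (v i) (v j)) :
    ∃ c : G.Walk z z, c.IsCycle ∧ c.length = L.length + 1 ∧
      c.support = z :: L.map v ++ [z] := by
  have hnodup : (z :: L.map v).Nodup :=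
    List.nodup_cons.2 ⟨by simpa using fun i hi h => hz i hi h.symm, hL.map_on hinj⟩
  obtain ⟨c, hc, hlen', hsupp⟩ := Walk.exists_isCycle_support_eq (G := G)
    (List.isChain_cons_map_append_singleton hhead hlast ha hb hstep) hnodup (by simpa using hlen)
  exact ⟨c, hc, by simpa using hlen', hsupp⟩

theorem mem_edges_of_support_eq {a b : ℕ} {c : G.Walk z z} (hc : c.support = z :: L.map v ++ [z])
    (hhead : L.head? = some a) (hlast : L.getLast? = some b) {e : Sym2 V} (he : e ∈ c.edges) :
    e = s(z, v a) ∨ e = s(v b, z) ∨ ∃ i j, [i, j] <:+: L ∧ e = s(v i, v j) := by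
  induction e using Sym2.ind with | h x y => ?_
  let R : V → V → Prop := fun x y =>
    s(x, y) = s(z, v a) ∨ s(x, y) = s(v b, z) ∨ ∃ i j, [i, j] <:+: L ∧ s(x, y) = s(v i, v j)
  have hchain : c.support.IsChain R :=
    hc ▸ List.isChain_cons_map_append_singleton hhead hlast (.inl rfl) (.inr (.inl rfl))
      fun i j hij => .inr (.inr ⟨i, j, hij, rfl⟩)
  rcases Walk.infix_support_iff_mem_edges.2 he with h | h
  · exact (hchain.infix h).rel
  · have hyx : R y x := (hchain.infix h).rel
    simp only [R] at hyx
    rwa [Sym2.eq_swap] at hyx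

theorem pair_infix_of_mem_edges {a b : ℕ} {c : G.Walk z z}
    (hc : c.support = z :: L.map v ++ [z]) (hhead : L.head? = some a)
    (hlast : L.getLast? = some b) (hinj : Set.InjOn v {i | i ∈ L}) (hz : ∀ i ∈ L, z ≠ v i)
    {i j : ℕ} (hi : i ∈ L) (hj : j ∈ L) (he : s(v i, v j) ∈ c.edges) :
    [i, j] <:+: L ∨ [j, i] <:+: L := by
  rcases mem_edges_of_support_eq hc hhead hlast he with he | he | ⟨i', j', hij, he⟩
  · rcases Sym2.eq_iff.1 he with ⟨he, -⟩ | ⟨-, he⟩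
    exacts [absurd he.symm (hz i hi), absurd he.symm (hz j hj)]
  · rcases Sym2.eq_iff.1 he with ⟨-, he⟩ | ⟨he, -⟩
    exacts [absurd he.symm (hz j hj), absurd he.symm (hz i hi)]
  · have hi' : i' ∈ L := hij.subset (by simp)
    have hj' : j' ∈ L := hij.subset (by simp)
    rcases Sym2.eq_iff.1 he with ⟨h1, h2⟩ | ⟨h1, h2⟩
    · rw [hinj hi hi' h1, hinj hj hj' h2]
      exact .inl hij
    · rw [hinj hi hj' h1, hinj hj hi' h2]
      exact .inr hij

theorem cycleChords_subset_of_forall {u : V} (c : G.Walk u u) {E : Set (Sym2 V)}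
    (h : ∀ x y, G.Adj x y → x ∈ c.support → y ∈ c.support →
      s(x, y) ∈ c.edges ∨ s(x, y) ∈ E) :
    G.cycleChords c ⊆ E := by
  rintro ⟨x, y⟩ ⟨hadj, hsupp, hne⟩
  exact (h x y hadj (hsupp x (Sym2.mem_mk_left x y)) (hsupp y (Sym2.mem_mk_right x y))).resolve_left
    hne

theorem cycleChords_subset_of_support_eq {c : G.Walk z z} (hc : c.support = z :: L.map v ++ [z])
    {E : Set (Sym2 V)}
    (hz : ∀ i ∈ L, G.Adj z (v i) →
      L.head? = some i ∨ L.getLast? = some i ∨ s(z, v i) ∈ E)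
    (hv : ∀ i ∈ L, ∀ j ∈ L, i < j → G.Adj (v i) (v j) →
      [i, j] <:+: L ∨ s(v i, v j) ∈ E) :
    G.cycleChords c ⊆ E := by
  have hmem : ∀ x ∈ c.support, x = z ∨ ∃ i ∈ L, v i = x := by
    intro x hx
    rw [hc] at hx
    simp only [List.cons_append, List.mem_cons, List.mem_append, List.mem_map] at hx
    tauto
  have hz' : ∀ i ∈ L, G.Adj z (v i) → s(z, v i) ∈ c.edges ∨ s(z, v i) ∈ E := by
    intro i hi hadj
    rcases hz i hi hadj with hhead | hlast | he
    · obtain ⟨L', rfl⟩ := List.head?_eq_some_iff.1 hhead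
      exact .inl (Walk.infix_support_iff_mem_edges.1 (.inl (hc ▸ ⟨[], _, rfl⟩)))
    · obtain ⟨L', rfl⟩ := List.getLast?_eq_some_iff.1 hlast
      exact .inl
        (Walk.infix_support_iff_mem_edges.1 (.inr (hc ▸ ⟨z :: L'.map v, [], by simp⟩)))
    · exact .inr he
  have hv' : ∀ i ∈ L, ∀ j ∈ L, i < j → G.Adj (v i) (v j) →
      s(v i, v j) ∈ c.edges ∨ s(v i, v j) ∈ E := by
    intro i hi j hj hij hadj
    refine (hv i hi j hj hij hadj).imp_left fun hinfix =>
      Walk.infix_support_iff_mem_edges.1 (.inl ?_)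
    rw [hc, List.cons_append]
    exact List.infix_cons ((hinfix.map v).trans (List.infix_append [] _ _))
  refine cycleChords_subset_of_forall c fun x y hadj hx hy => ?_
  rcases hmem x hx with rfl | ⟨i, hi, rfl⟩ <;> rcases hmem y hy with rfl | ⟨j, hj, rfl⟩
  · exact absurd hadj G.irrefl
  · exact hz' j hj hadj
  · rw [Sym2.eq_swap]; exact hz' i hi hadj.symm
  · rcases lt_trichotomy i j with hij | rfl | hij
    · exact hv' i hi j hj hij hadj
    · exact absurd hadj G.irrefl
    · rw [Sym2.eq_swap]; exact hv' j hj i hi hij hadj.symm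

end SimpleGraph

/-- What the proof uses of a near-obstruction of Type 4, restricted to `z, v 0, …, v r`. -/
structure Type4Prefix {V : Type*} (G : SimpleGraph V) (v : ℕ → V) (z : V) (r : ℕ) : Prop where
  three_le : 3 ≤ r
  injOn : Set.InjOn v (Set.Iic r)
  ne : ∀ i ≤ r, z ≠ v i
  adj_succ : ∀ i < r, G.Adj (v i) (v (i + 1))
  adj_zero : G.Adj z (v 0)
  adj_one : G.Adj z (v 1)
  adj_last : G.Adj z (v r)
  eq_of_adj_z : ∀ i ≤ r, G.Adj z (v i) → i = 0 ∨ i = 1 ∨ i = r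
  eq_of_adj : ∀ i j, i < j → j ≤ r → G.Adj (v i) (v j) →
    j = i + 1 ∨ (j = i + 2 ∧ 2 ≤ i)
  eq_of_adj_add_two : ∀ i j, i + 2 ≤ r → j + 2 ≤ r →
    G.Adj (v i) (v (i + 2)) → G.Adj (v j) (v (j + 2)) → i = j

namespace Type4Prefix

variable {V : Type*} {G : SimpleGraph V} {v : ℕ → V} {z : V} {r : ℕ}

theorem of_nearObstruction {p : ℕ} (hinj : Set.InjOn v (Set.Iic p))
    (hpath : ∀ i, i < p → G.Adj (v i) (v (i + 1)))
    (hshape : ∀ i j, G.IsPathChord p v i j →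
      ∃ t, 0 < t ∧ t < p - 1 ∧ i = t - 1 ∧ j = t + 1)
    (hone : ∀ i j i' j', G.IsPathChord p v i j → G.IsPathChord p v i' j' → i = i' ∧ j = j')
    (h02 : ¬ G.Adj (v 0) (v 2)) (h13 : ¬ G.Adj (v 1) (v 3)) (hz : ∀ i, i ≤ p → z ≠ v i)
    (hz0 : G.Adj z (v 0)) (hz1 : G.Adj z (v 1)) (hz2 : ¬ G.Adj z (v 2))
    (hr3 : 3 ≤ r) (hrp : r ≤ p) (hzr : G.Adj z (v r))
    (hrmin : ∀ i, 3 ≤ i → i < r → ¬ G.Adj z (v i)) : Type4Prefix G v z r where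
  three_le := hr3
  injOn := hinj.mono (Set.Iic_subset_Iic.2 hrp)
  ne i hi := hz i (hi.trans hrp)
  adj_succ i hi := hpath i (by omega)
  adj_zero := hz0
  adj_one := hz1
  adj_last := hzr
  eq_of_adj_z i hi hadj := by
    by_contra! hne
    rcases (by omega : i = 2 ∨ 3 ≤ i) with rfl | h3
    exacts [hz2 hadj, hrmin i h3 (by omega) hadj]
  eq_of_adj i j hij hj hadj := by
    rcases (by omega : j = i + 1 ∨ i + 2 ≤ j) with h | h
    · exact .inl h
    obtain ⟨t, ht, -, rfl, rfl⟩ := hshape i j ⟨h, by omega, hadj⟩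
    refine .inr ⟨by omega, ?_⟩
    rcases (by omega : t = 1 ∨ t = 2 ∨ 3 ≤ t) with rfl | rfl | h3
    exacts [absurd hadj h02, absurd hadj h13, by omega]
  eq_of_adj_add_two i j hi hj hadji hadjj :=
    (hone i (i + 2) j (j + 2) ⟨le_rfl, by omega, hadji⟩ ⟨le_rfl, by omega, hadjj⟩).1

theorem cycleChords_subset (h : Type4Prefix G v z r) {L : List ℕ} {c : G.Walk z z}
    (hc : c.support = z :: L.map v ++ [z]) (hL : L.Pairwise (· < ·)) (hLr : ∀ i ∈ L, i ≤ r)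
    (hlast : L.getLast? = some r) {E : Set (Sym2 V)}
    (hz : ∀ i ≤ 1, i ∈ L → L.head? = some i ∨ s(z, v i) ∈ E)
    (hE : ∀ i, 2 ≤ i → i ∈ L → i + 1 ∈ L → i + 2 ∈ L → G.Adj (v i) (v (i + 2)) →
      s(v i, v (i + 2)) ∈ E) :
    G.cycleChords c ⊆ E := by
  refine cycleChords_subset_of_support_eq hc (fun i hi hadj => ?_) (fun i hi j hj hij hadj => ?_)
  · rcases h.eq_of_adj_z i (hLr i hi) hadj with rfl | rfl | rfl
    · exact (hz 0 (by omega) hi).imp_right .inr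
    · exact (hz 1 le_rfl hi).imp_right .inr
    · exact .inr (.inl hlast)
  · rw [hL.pair_infix_iff]
    rcases h.eq_of_adj i j hij (hLr j hj) hadj with rfl | ⟨rfl, hi2⟩
    · exact .inl ⟨hi, hj, hij, fun k _ => by omega⟩
    · by_cases hmid : i + 1 ∈ L
      · exact .inr (hE i hi2 hi hmid hj hadj)
      · refine .inl ⟨hi, hj, hij, fun k hk => ?_⟩
        have : k ≠ i + 1 := fun hk' => hmid (hk' ▸ hk)
        omega

theorem exists_isCycle_range' (h : Type4Prefix G v z r) {a : ℕ} (ha : a ≤ 1) :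
    ∃ c : G.Walk z z, c.IsCycle ∧ c.length = r - a + 2 ∧
      c.support = z :: (List.range' a (r + 1 - a)).map v ++ [z] := by
  have h3 := h.three_le
  have hza : G.Adj z (v a) := by
    rcases Nat.le_one_iff_eq_zero_or_eq_one.1 ha with rfl | rfl
    exacts [h.adj_zero, h.adj_one]
  obtain ⟨c, hc, hlen, hsupp⟩ := exists_isCycle_support_eq_map
    (L := List.range' a (r + 1 - a)) List.nodup_range'
    (h.injOn.mono fun i hi => by simp at hi ⊢; omega)
    (fun i hi => h.ne i (by simp at hi; omega)) (by simp; omega)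
    (by simp [List.head?_range']; omega)
    (by simp [List.getLast?_range']; omega) hza h.adj_last.symm
    (fun i j hij => by
      obtain ⟨-, rfl, hj⟩ := List.pair_infix_range'_iff.1 hij
      exact h.adj_succ i (by omega))
  exact ⟨c, hc, by simp [hlen]; omega, hsupp⟩

theorem exists_isCycle_skip (h : Type4Prefix G v z r) {t : ℕ} (ht : 2 < t) (htr : t < r)
    (hadj : G.Adj (v (t - 1)) (v (t + 1))) :
    ∃ (L : List ℕ) (c : G.Walk z z), (∀ i, i ∈ L ↔ i ∈ Set.Icc 1 r \ {t}) ∧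
      L.Pairwise (· < ·) ∧ L.head? = some 1 ∧ L.getLast? = some r ∧
      c.IsCycle ∧ c.length = r ∧ c.support = z :: L.map v ++ [z] := by
  set L := List.range' 1 (t - 1) ++ List.range' (t + 1) (r - t)
  have hmem : ∀ i, i ∈ L ↔ i ∈ Set.Icc 1 r \ {t} := by
    intro i
    simp only [L, List.mem_append, List.mem_range'_1, Set.mem_sdiff, Set.mem_Icc,
      Set.mem_singleton_iff]
    omega
  have hLr : ∀ i ∈ L, i ≤ r := fun i hi => ((hmem i).1 hi).1.2
  have hsorted : L.Pairwise (· < ·) := by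
    refine List.pairwise_append.2 ⟨List.pairwise_lt_range', List.pairwise_lt_range', ?_⟩
    simp only [List.mem_range'_1]
    omega
  have hhead : L.head? = some 1 := by
    simp [L, List.head?_append, List.head?_range']
    omega
  have hlast : L.getLast? = some r := by
    simp [L, List.getLast?_append, List.getLast?_range']
    omega
  have hstep : ∀ i j, [i, j] <:+: L → G.Adj (v i) (v j) := by
    intro i j hij
    obtain ⟨hi, hj, hlt, hgap⟩ := hsorted.pair_infix_iff.1 hij
    have h1 := hgap (i + 1)
    have h2 := hgap (i + 2)
    simp only [hmem, Set.mem_sdiff, Set.mem_Icc, Set.mem_singleton_iff] at hi hj h1 h2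
    rcases (by omega : j = i + 1 ∨ (i = t - 1 ∧ j = t + 1)) with rfl | ⟨rfl, rfl⟩
    · exact h.adj_succ i (by omega)
    · exact hadj
  obtain ⟨c, hc, hlen, hsupp⟩ := exists_isCycle_support_eq_map (hsorted.imp ne_of_lt)
    (h.injOn.mono fun i hi => hLr i hi) (fun i hi => h.ne i (hLr i hi)) (by simp [L]; omega)
    hhead hlast h.adj_one h.adj_last.symm hstep
  exact ⟨L, c, hmem, hsorted, hhead, hlast, hc, by simp [hlen, L]; omega, hsupp⟩

theorem exists_oddHole_of_chord (h : Type4Prefix G v z r) {t : ℕ} (ht : 2 < t) (htr : t < r)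
    (hadj : G.Adj (v (t - 1)) (v (t + 1))) (hr : Odd r) :
    ∃ (u : V) (c : G.Walk u u), c.IsCycle ∧ Odd c.length ∧ 5 ≤ c.length ∧
      G.cycleChords c = ∅ ∧ {x | x ∈ c.support} = insert z (v '' (Set.Icc 1 r \ {t})) := by
  obtain ⟨L, c, hmem, hsorted, hhead, hlast, hc, hlen, hsupp⟩ :=
    h.exists_isCycle_skip ht htr hadj
  have hLr : ∀ i ∈ L, i ≤ r := fun i hi => ((hmem i).1 hi).1.2
  have hchords : G.cycleChords c ⊆ ∅ := by
    refine h.cycleChords_subset hsupp hsorted hLr hlast (fun i hi hiL => .inl ?_)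
      (fun i hi2 _ hi1 hi2' hadj' => ?_)
    · have := (hmem i).1 hiL
      simp only [Set.mem_sdiff, Set.mem_Icc] at this
      obtain rfl : i = 1 := by omega
      exact hhead
    · have hit := h.eq_of_adj_add_two i (t - 1) (hLr _ hi2') (by omega) hadj'
        (by rwa [show t - 1 + 2 = t + 1 by omega])
      exact absurd (Set.mem_singleton_iff.2 (by omega)) ((hmem (i + 1)).1 hi1).2
  refine ⟨z, c, hc, hlen ▸ hr, ?_, Set.subset_empty_iff.1 hchords,
    hsupp ▸ List.setOf_mem_cons_map_append_singleton z v hmem⟩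
  obtain ⟨k, hk⟩ := hr
  omega

theorem exists_isCycle_Icc_one (h : Type4Prefix G v z r) :
    ∃ c : G.Walk z z, c.IsCycle ∧ c.length = r + 1 ∧
      c.support = z :: (List.range' 1 r).map v ++ [z] ∧
      G.cycleChords c ⊆ {e | ∃ i, 2 ≤ i ∧ i + 2 ≤ r ∧ G.Adj (v i) (v (i + 2)) ∧
        e = s(v i, v (i + 2))} := by
  have h3 := h.three_le
  obtain ⟨c, hc, hlen, hsupp⟩ := h.exists_isCycle_range' le_rfl
  rw [Nat.add_sub_cancel] at hsupp
  refine ⟨c, hc, by omega, hsupp, h.cycleChords_subset hsupp List.pairwise_lt_range'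
    (fun i hi => by simp at hi; omega) (by simp [List.getLast?_range']; omega)
    (fun i hi hiL => .inl ?_) (fun i hi2 _ _ hi2' hadj => ⟨i, hi2, ?_, hadj, rfl⟩)⟩
  · simp only [List.mem_range'_1] at hiL
    obtain rfl : i = 1 := by omega
    simp [List.head?_range']
    omega
  · simp only [List.mem_range'_1] at hi2'
    omega

theorem exists_cycle_chord_of_even (h : Type4Prefix G v z r) {t : ℕ} (ht : 2 < t) (htr : t < r)
    (hadj : G.Adj (v (t - 1)) (v (t + 1))) (hr : Even r) :
    ∃ (u : V) (c : G.Walk u u), c.IsCycle ∧ Odd c.length ∧ 5 ≤ c.length ∧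
      G.cycleChords c = {s(v (t - 1), v (t + 1))} ∧
      {x | x ∈ c.support} = insert z (v '' Set.Icc 1 r) := by
  obtain ⟨c, hc, hlen, hsupp, hchords⟩ := h.exists_isCycle_Icc_one
  have hsub : G.cycleChords c ⊆ {s(v (t - 1), v (t + 1))} := by
    intro e he
    obtain ⟨i, hi2, hir, hadj', rfl⟩ := hchords he
    obtain rfl := h.eq_of_adj_add_two i (t - 1) hir (by omega) hadj'
      (by rwa [show t - 1 + 2 = t + 1 by omega])
    rw [show t - 1 + 2 = t + 1 by omega, Set.mem_singleton_iff]
  have hmem : ∀ i, 1 ≤ i → i ≤ r → i ∈ List.range' 1 r := fun i hi hir => by simp; omega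
  have hchord : s(v (t - 1), v (t + 1)) ∈ G.cycleChords c := by
    refine ⟨hadj, fun x hx => ?_, fun he => ?_⟩
    · rw [hsupp]
      rcases Sym2.mem_iff.1 hx with rfl | rfl <;>
        exact List.mem_cons_of_mem _ (List.mem_append_left _
          (List.mem_map_of_mem (hmem _ (by omega) (by omega))))
    · rcases pair_infix_of_mem_edges hsupp (a := 1) (b := r) (by simp [List.head?_range']; omega)
        (by simp [List.getLast?_range']; omega) (h.injOn.mono fun i hi => by simp at hi ⊢; omega)
        (fun i hi => h.ne i (by simp at hi; omega)) (hmem (t - 1) (by omega) (by omega))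
        (hmem (t + 1) (by omega) (by omega)) he with hinfix | hinfix <;>
      · rw [List.pair_infix_range'_iff] at hinfix
        omega
  refine ⟨z, c, hc, by rw [hlen]; exact hr.add_one, ?_,
    hsub.antisymm (Set.singleton_subset_iff.2 hchord),
    hsupp ▸ List.setOf_mem_cons_map_append_singleton z v fun i => by simp; omega⟩
  obtain ⟨k, hk⟩ := hr
  omega

theorem z_one_mem_cycleChords (h : Type4Prefix G v z r) {c : G.Walk z z}
    (hsupp : c.support = z :: (List.range' 0 (r + 1)).map v ++ [z]) :
    s(z, v 1) ∈ G.cycleChords c := by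
  have h3 := h.three_le
  refine ⟨h.adj_one, fun x hx => ?_, fun hmem => ?_⟩
  · rw [hsupp]
    simp only [List.cons_append, List.mem_cons, List.mem_append, List.mem_map, List.mem_range'_1]
    rcases Sym2.mem_iff.1 hx with rfl | rfl
    exacts [.inl rfl, .inr (.inl ⟨1, by omega, rfl⟩)]
  rcases mem_edges_of_support_eq hsupp (a := 0) (b := r) (by simp [List.head?_range'])
    (by simp [List.getLast?_range']) hmem with he | he | ⟨i, j, hij, he⟩
  · simp only [Sym2.eq_iff, true_and] at he
    rcases he with he | ⟨he, -⟩
    · exact absurd (h.injOn (by omega : 1 ≤ r) (by omega : 0 ≤ r) he) one_ne_zero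
    · exact h.ne 0 (by omega) he
  · simp only [Sym2.eq_iff] at he
    rcases he with ⟨he, -⟩ | ⟨-, he⟩
    · exact h.ne r le_rfl he
    · exact absurd (h.injOn (by omega : 1 ≤ r) (le_refl r) he) (by omega)
  · obtain ⟨-, rfl, hj⟩ := List.pair_infix_range'_iff.1 hij
    simp only [Sym2.eq_iff] at he
    rcases he with ⟨he, -⟩ | ⟨he, -⟩
    exacts [h.ne i (by omega) he, h.ne (i + 1) (by omega) he]

theorem exists_cycle_chord_zv1_of_odd (h : Type4Prefix G v z r)
    (hno : ∀ t, 2 < t → t < r → ¬ G.Adj (v (t - 1)) (v (t + 1))) (hr : Odd r) :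
    ∃ (u : V) (c : G.Walk u u), c.IsCycle ∧ Odd c.length ∧ 5 ≤ c.length ∧
      G.cycleChords c = {s(z, v 1)} ∧ {x | x ∈ c.support} = insert z (v '' Set.Iic r) := by
  have h3 := h.three_le
  obtain ⟨c, hc, hlen, hsupp⟩ := h.exists_isCycle_range' zero_le_one
  rw [Nat.sub_zero] at hsupp
  have hsub : G.cycleChords c ⊆ {s(z, v 1)} := by
    refine h.cycleChords_subset hsupp List.pairwise_lt_range' (fun i hi => by simp at hi; omega)
      (by simp [List.getLast?_range']) (fun i hi _ => ?_) (fun i hi2 _ _ hi2' hadj => ?_)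
    · rcases Nat.le_one_iff_eq_zero_or_eq_one.1 hi with rfl | rfl
      exacts [.inl (by simp [List.head?_range']), .inr rfl]
    · simp only [List.mem_range'_1] at hi2'
      exact absurd hadj (by simpa using hno (i + 1) (by omega) (by omega))
  refine ⟨z, c, hc, by rw [hlen]; exact hr.add_even even_two, by omega,
    hsub.antisymm (Set.singleton_subset_iff.2 (h.z_one_mem_cycleChords hsupp)),
    hsupp ▸ List.setOf_mem_cons_map_append_singleton z v fun i => by simp⟩

theorem exists_oddHole_of_even (h : Type4Prefix G v z r)
    (hno : ∀ t, 2 < t → t < r → ¬ G.Adj (v (t - 1)) (v (t + 1))) (hr : Even r) :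
    ∃ (u : V) (c : G.Walk u u), c.IsCycle ∧ Odd c.length ∧ 5 ≤ c.length ∧
      G.cycleChords c = ∅ ∧ {x | x ∈ c.support} = insert z (v '' Set.Icc 1 r) := by
  obtain ⟨c, hc, hlen, hsupp, hchords⟩ := h.exists_isCycle_Icc_one
  have hsub : G.cycleChords c ⊆ ∅ := by
    intro e he
    obtain ⟨i, hi2, hir, hadj, -⟩ := hchords he
    exact hno (i + 1) (by omega) (by omega) (by simpa using hadj)
  refine ⟨z, c, hc, by rw [hlen]; exact hr.add_one, ?_, Set.subset_empty_iff.1 hsub,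
    hsupp ▸ List.setOf_mem_cons_map_append_singleton z v fun i => by simp; omega⟩
  have := h.three_le
  obtain ⟨k, hk⟩ := hr
  omega

end Type4Prefix

theorem exists_meyniel_of_exists_cycle {V : Type*} {G : SimpleGraph V} {v : ℕ → V} {z : V}
    {r : ℕ} {S : Set ℕ} {E : Set (Sym2 V)} (hS : S ⊆ Set.Iic r) (hE : E.ncard ≤ 1)
    (h : ∃ (u : V) (c : G.Walk u u), c.IsCycle ∧ Odd c.length ∧ 5 ≤ c.length ∧
      G.cycleChords c = E ∧ {x | x ∈ c.support} = insert z (v '' S)) :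
    ∃ (u : V) (c : G.Walk u u), c.IsCycle ∧ Odd c.length ∧ 5 ≤ c.length ∧
      (G.cycleChords c).ncard ≤ 1 ∧ ∀ x ∈ c.support, x ∈ insert z (v '' Set.Iic r) := by
  obtain ⟨u, c, hc, hodd, h5, rfl, hsupp⟩ := h
  refine ⟨u, c, hc, hodd, h5, hE, fun x hx => ?_⟩
  have hx' : x ∈ insert z (v '' S) := by rw [← hsupp]; exact hx
  exact Set.insert_subset_insert (Set.image_mono hS) hx'

theorem type4_nearObstruction_meynielObstruction_general {V : Type*}
    (G : SimpleGraph V) (p : ℕ) (v : ℕ → V) (z : V) (r : ℕ)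
    (hinj : Set.InjOn v (Set.Iic p))
    (hpath : ∀ i, i < p → G.Adj (v i) (v (i + 1)))
    (hshape : ∀ i j, G.IsPathChord p v i j → ∃ t, 0 < t ∧ t < p - 1 ∧ i = t - 1 ∧ j = t + 1)
    (hone : ∀ i j i' j', G.IsPathChord p v i j → G.IsPathChord p v i' j' → i = i' ∧ j = j')
    (h02 : ¬ G.Adj (v 0) (v 2)) (h13 : ¬ G.Adj (v 1) (v 3))
    (hz : ∀ i, i ≤ p → z ≠ v i)
    (hz0 : G.Adj z (v 0))
    (hz1 : G.Adj z (v 1)) (hz2 : ¬ G.Adj z (v 2))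
    (hr3 : 3 ≤ r) (hrp : r ≤ p) (hzr : G.Adj z (v r))
    (hrmin : ∀ i, 3 ≤ i → i < r → ¬ G.Adj z (v i)) :
    -- the subgraph induced by `{z, v 0, …, v r}` contains a Meyniel obstruction
    (∃ (u : V) (c : G.Walk u u), c.IsCycle ∧ Odd c.length ∧ 5 ≤ c.length ∧
      (G.cycleChords c).ncard ≤ 1 ∧ ∀ x ∈ c.support, x ∈ insert z (v '' Set.Iic r)) ∧
    -- case: `P` has a chord `v (t-1) v (t+1)` with `2 < t < r`
    (∀ t, 2 < t → t < r → G.Adj (v (t - 1)) (v (t + 1)) →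
      (Odd r → ∃ (u : V) (c : G.Walk u u), c.IsCycle ∧ Odd c.length ∧ 5 ≤ c.length ∧
        G.cycleChords c = ∅ ∧
        {x | x ∈ c.support} = insert z (v '' (Set.Icc 1 r \ {t}))) ∧
      (Even r → ∃ (u : V) (c : G.Walk u u), c.IsCycle ∧ Odd c.length ∧ 5 ≤ c.length ∧
        G.cycleChords c = {s(v (t - 1), v (t + 1))} ∧
        {x | x ∈ c.support} = insert z (v '' Set.Icc 1 r))) ∧
    -- case: `P` has no chord `v (t-1) v (t+1)` with `2 < t < r`
    ((∀ t, 2 < t → t < r → ¬ G.Adj (v (t - 1)) (v (t + 1))) →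
      (Odd r → ∃ (u : V) (c : G.Walk u u), c.IsCycle ∧ Odd c.length ∧ 5 ≤ c.length ∧
        G.cycleChords c = {s(z, v 1)} ∧
        {x | x ∈ c.support} = insert z (v '' Set.Iic r)) ∧
      (Even r → ∃ (u : V) (c : G.Walk u u), c.IsCycle ∧ Odd c.length ∧ 5 ≤ c.length ∧
        G.cycleChords c = ∅ ∧
        {x | x ∈ c.support} = insert z (v '' Set.Icc 1 r))) := by
  have h := Type4Prefix.of_nearObstruction hinj hpath hshape hone h02 h13 hz hz0 hz1 hz2 hr3 hrp
    hzr hrmin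
  refine ⟨?_, fun t ht htr hadj => ⟨h.exists_oddHole_of_chord ht htr hadj,
    h.exists_cycle_chord_of_even ht htr hadj⟩, fun hno => ⟨h.exists_cycle_chord_zv1_of_odd hno,
    h.exists_oddHole_of_even hno⟩⟩
  by_cases hchord : ∃ t, 2 < t ∧ t < r ∧ G.Adj (v (t - 1)) (v (t + 1))
  · obtain ⟨t, ht, htr, hadj⟩ := hchord
    rcases Nat.even_or_odd r with hr | hr
    · exact exists_meyniel_of_exists_cycle (fun i hi => hi.2) (by simp)
        (h.exists_cycle_chord_of_even ht htr hadj hr)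
    · exact exists_meyniel_of_exists_cycle (fun i hi => hi.1.2) (by simp)
        (h.exists_oddHole_of_chord ht htr hadj hr)
  · push Not at hchord
    rcases Nat.even_or_odd r with hr | hr
    · exact exists_meyniel_of_exists_cycle (fun i hi => hi.2) (by simp)
        (h.exists_oddHole_of_even hchord hr)
    · exact exists_meyniel_of_exists_cycle subset_rfl (by simp)
        (h.exists_cycle_chord_zv1_of_odd hchord hr)

/-- Near-obstruction of Type 4: `P = v 0 - ⋯ - v p` is a path with `p` odd, `p ≥ 3`,
with at most one chord, any chord being `v (t-1) v (t+1)` with `0 < t < p - 1`, and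
neither `v 0 v 2` nor `v 1 v 3` a chord; `z` is a vertex off `P` adjacent to `v 0`,
`v p` and `v 1` but not to `v 2`; `r` is the smallest integer `≥ 3` with `z` adjacent
to `v r`.  Then the subgraph induced by `{z, v 0, …, v r}` contains a Meyniel
obstruction, with the explicit case analysis: if `P` has a chord `v (t-1) v (t+1)`
with `2 < t < r`, the obstruction is the cycle through `z, v 1, …, v r` (an odd hole
after deleting `v t` when `r` is odd; an odd cycle with only chord `v (t-1) v (t+1)`
when `r` is even); otherwise, if `r` is odd then `z, v 0, …, v r` induce an odd cycle
whose only chord is `z v 1`, and if `r` is even then `z, v 1, …, v r` induce a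
chordless odd cycle of length at least five. -/
theorem type4_nearObstruction_meynielObstruction {V : Type*} [Fintype V]
    (G : SimpleGraph V) (p : ℕ) (v : ℕ → V) (z : V) (r : ℕ)
    (hodd : Odd p) (hp : 3 ≤ p) (hinj : Set.InjOn v (Set.Iic p))
    (hpath : ∀ i, i < p → G.Adj (v i) (v (i + 1)))
    (hshape : ∀ i j, G.IsPathChord p v i j → ∃ t, 0 < t ∧ t < p - 1 ∧ i = t - 1 ∧ j = t + 1)
    (hone : ∀ i j i' j', G.IsPathChord p v i j → G.IsPathChord p v i' j' → i = i' ∧ j = j')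
    (h02 : ¬ G.Adj (v 0) (v 2)) (h13 : ¬ G.Adj (v 1) (v 3))
    (hz : ∀ i, i ≤ p → z ≠ v i)
    (hz0 : G.Adj z (v 0)) (hzp : G.Adj z (v p))
    (hz1 : G.Adj z (v 1)) (hz2 : ¬ G.Adj z (v 2))
    (hr3 : 3 ≤ r) (hrp : r ≤ p) (hzr : G.Adj z (v r))
    (hrmin : ∀ i, 3 ≤ i → i < r → ¬ G.Adj z (v i)) :
    -- the subgraph induced by `{z, v 0, …, v r}` contains a Meyniel obstruction
    (∃ (u : V) (c : G.Walk u u), c.IsCycle ∧ Odd c.length ∧ 5 ≤ c.length ∧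
      (G.cycleChords c).ncard ≤ 1 ∧ ∀ x ∈ c.support, x ∈ insert z (v '' Set.Iic r)) ∧
    -- case: `P` has a chord `v (t-1) v (t+1)` with `2 < t < r`
    (∀ t, 2 < t → t < r → G.Adj (v (t - 1)) (v (t + 1)) →
      (Odd r → ∃ (u : V) (c : G.Walk u u), c.IsCycle ∧ Odd c.length ∧ 5 ≤ c.length ∧
        G.cycleChords c = ∅ ∧
        {x | x ∈ c.support} = insert z (v '' (Set.Icc 1 r \ {t}))) ∧
      (Even r → ∃ (u : V) (c : G.Walk u u), c.IsCycle ∧ Odd c.length ∧ 5 ≤ c.length ∧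
        G.cycleChords c = {s(v (t - 1), v (t + 1))} ∧
        {x | x ∈ c.support} = insert z (v '' Set.Icc 1 r))) ∧
    -- case: `P` has no chord `v (t-1) v (t+1)` with `2 < t < r`
    ((∀ t, 2 < t → t < r → ¬ G.Adj (v (t - 1)) (v (t + 1))) →
      (Odd r → ∃ (u : V) (c : G.Walk u u), c.IsCycle ∧ Odd c.length ∧ 5 ≤ c.length ∧
        G.cycleChords c = {s(z, v 1)} ∧
        {x | x ∈ c.support} = insert z (v '' Set.Iic r)) ∧
      (Even r → ∃ (u : V) (c : G.Walk u u), c.IsCycle ∧ Odd c.length ∧ 5 ≤ c.length ∧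
        G.cycleChords c = ∅ ∧
        {x | x ∈ c.support} = insert z (v '' Set.Icc 1 r))) :=
  type4_nearObstruction_meynielObstruction_general G p v z r hinj hpath hshape hone h02 h13 hz hz0
    hz1 hz2 hr3 hrp hzr hrmin
end

section
/- Let G be a finite simple graph with at least one vertex and let S be a nonempty strong stable set of G. Then the clique number of the graph obtained from G by deleting the vertices of S equals the clique number of G minus one. -/
open SimpleGraph

/-- A stable (independent) set: a set of pairwise nonadjacent vertices. -/
def SimpleGraph.IsStableSet {V : Type*} (G : SimpleGraph V) (S : Set V) : Prop :=
  S.Pairwise fun a b => ¬ G.Adj a b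

/-- A strong stable set: a stable set meeting every inclusion-maximal clique. -/
def SimpleGraph.IsStrongStableSet {V : Type*} (G : SimpleGraph V) (S : Set V) : Prop :=
  G.IsStableSet S ∧
    ∀ Q : Set V, G.IsClique Q → (∀ Q' : Set V, G.IsClique Q' → Q ⊆ Q' → Q' = Q) →
      (S ∩ Q).Nonempty

/-- Deleting a nonempty strong stable set decreases the clique number by exactly one. -/
theorem cliqueNum_delete_strongStableSet {V : Type*} [Fintype V] [Nonempty V]
    (G : SimpleGraph V) (S : Set V) (hne : S.Nonempty)
    (hS : G.IsStrongStableSet S) :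
    (G.induce Sᶜ).cliqueNum = G.cliqueNum - 1 := by
  classical
  obtain ⟨hstab, hmeet⟩ := hS
  -- 1 ≤ cliqueNum
  have hω1 : 1 ≤ G.cliqueNum := by
    obtain ⟨v⟩ := ‹Nonempty V›
    have hc : G.IsClique (({v} : Finset V) : Set V) := by simp
    have := hc.card_le_cliqueNum
    simpa using this
  -- upper bound: induce cliqueNum + 1 ≤ cliqueNum
  have hle : (G.induce Sᶜ).cliqueNum + 1 ≤ G.cliqueNum := by
    obtain ⟨u, hu⟩ := (G.induce Sᶜ).exists_isNClique_cliqueNum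
    set t : Finset V := u.map ⟨Subtype.val, Subtype.val_injective⟩ with ht
    have htS : (t : Set V) ⊆ Sᶜ := by
      intro y hy
      simp only [ht, Finset.coe_map, Set.mem_image, Finset.mem_coe] at hy
      obtain ⟨a, _, rfl⟩ := hy
      exact a.2
    have htc : G.IsClique (t : Set V) := by
      intro a ha b hb hab
      simp only [ht, Finset.coe_map, Set.mem_image, Finset.mem_coe,
        Function.Embedding.coeFn_mk] at ha hb
      obtain ⟨a', ha', rfl⟩ := ha
      obtain ⟨b', hb', rfl⟩ := hb
      have hne' : a' ≠ b' := fun h => hab (by rw [h])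
      exact hu.isClique ha' hb' hne'
    obtain ⟨Q, hQsub, hQmax⟩ := Finite.exists_le_maximal (p := G.IsClique)
      (a := (t : Set V)) htc
    obtain ⟨x, hxS, hxQ⟩ := hmeet Q hQmax.1
      (fun Q' hQ' hsub => Set.Subset.antisymm (hQmax.2 hQ' hsub) hsub)
    have hxt : x ∉ t := fun hxt => (htS hxt) hxS
    have hins : (insert x t : Finset V) ⊆ Q.toFinset := by
      intro y hy
      rcases Finset.mem_insert.1 hy with rfl | hy
      · exact Set.mem_toFinset.2 hxQ
      · exact Set.mem_toFinset.2 (hQsub hy)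
    have hQc : G.IsClique (Q.toFinset : Set V) := by
      rw [Set.coe_toFinset]; exact hQmax.1
    have h1 : (insert x t).card ≤ Q.toFinset.card := Finset.card_le_card hins
    have h2 : Q.toFinset.card ≤ G.cliqueNum := hQc.card_le_cliqueNum
    have h3 : (insert x t).card = (G.induce Sᶜ).cliqueNum + 1 := by
      rw [Finset.card_insert_of_notMem hxt, ht, Finset.card_map, hu.card_eq]
    omega
  -- lower bound: cliqueNum - 1 ≤ induce cliqueNum
  have hge : G.cliqueNum - 1 ≤ (G.induce Sᶜ).cliqueNum := by
    obtain ⟨s, hs⟩ := G.maximumClique_exists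
    have hscard : s.card = G.cliqueNum := G.maximumClique_card_eq_cliqueNum s hs
    have hsmax : Maximal G.IsClique (s : Set V) := hs.isMaximalClique s
    obtain ⟨x, hxS, hxs⟩ := hmeet (s : Set V) hsmax.1
      (fun Q' hQ' hsub => Set.Subset.antisymm (hsmax.2 hQ' hsub) hsub)
    have hxs' : x ∈ s := hxs
    -- every other vertex of s is outside S
    have hout : ∀ y ∈ s, y ≠ x → y ∈ Sᶜ := by
      intro y hy hyx hyS
      exact hstab hyS hxS hyx (hsmax.1 hy hxs' hyx)
    set u : Finset ↥Sᶜ := (s.erase x).subtype (· ∈ Sᶜ) with hu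
    have hucard : u.card = s.card - 1 := by
      rw [hu, Finset.card_subtype]
      rw [Finset.filter_true_of_mem (fun y hy =>
        hout y (Finset.mem_of_mem_erase hy) (Finset.ne_of_mem_erase hy))]
      exact Finset.card_erase_of_mem hxs'
    have huc : (G.induce Sᶜ).IsClique (u : Set ↥Sᶜ) := by
      intro a ha b hb hab
      simp only [hu, Finset.mem_coe, Finset.mem_subtype] at ha hb
      have hab' : (a : V) ≠ (b : V) := fun h => hab (Subtype.ext h)
      exact hsmax.1 (Finset.mem_of_mem_erase ha) (Finset.mem_of_mem_erase hb) hab'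
    have := huc.card_le_cliqueNum
    omega
  omega
end

section
/- Let G be a finite simple graph such that every nonempty induced subgraph of G contains a strong stable set. Then the chromatic number of G equals its clique number: iteratively choosing a strong stable set S_1 of G, a strong stable set S_2 of G minus S_1, and so on until no vertices remain, yields a proper coloring S_1, …, S_ℓ of G whose number of colors ℓ equals the size of some clique of G. -/
open SimpleGraph

/-!
Peel off a strong stable set `S` of `G` and recurse on `G - S`, which gives a colouring
by induction. If `Q` is a clique of `G - S` of the size of its colouring, extend `Q` to a
maximal clique of `G`; this meets `S`, so `Q` plus a vertex of `S` is a clique of `G`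
whose size is the number of colours used on `G`.
-/

namespace SimpleGraph

variable {V : Type*} {G : SimpleGraph V}

theorem IsStrongStableSet.exists_isClique_insert [Finite V] {S Q : Set V}
    (hS : G.IsStrongStableSet S) (hQ : G.IsClique Q) :
    ∃ y ∈ S, G.IsClique (insert y Q) := by
  obtain ⟨M, hQM, hM⟩ := Finite.exists_le_maximal hQ
  obtain ⟨y, hyS, hyM⟩ :=
    hS.2 M hM.prop fun Q' hQ' hMQ' => (hM.eq_of_subset hQ' hMQ').symm
  exact ⟨y, hyS, hM.prop.subset (Set.insert_subset hyM hQM)⟩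

theorem IsStableSet.image_val {s : Set V} {S : Set s} (hS : (G.induce s).IsStableSet S) :
    G.IsStableSet (Subtype.val '' S) := by
  rintro _ ⟨a, ha, rfl⟩ _ ⟨b, hb, rfl⟩ hab
  exact hS ha hb (fun e => hab (congrArg Subtype.val e))

theorem IsStrongStableSet.exists_isClique_insert_of_induce [Finite V] {s Q : Set V}
    {S : Set s} (hS : (G.induce s).IsStrongStableSet S) (hQs : Q ⊆ s) (hQ : G.IsClique Q) :
    ∃ y ∈ Subtype.val '' S, G.IsClique (insert y Q) := by
  have hQ' : (G.induce s).IsClique (Subtype.val ⁻¹' Q) := by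
    rwa [isClique_induce_iff, Set.image_preimage_eq_of_subset (by simpa using hQs)]
  obtain ⟨y, hyS, hy⟩ := hS.exists_isClique_insert hQ'
  rw [isClique_induce_iff, Set.image_insert_eq,
    Set.image_preimage_eq_of_subset (by simpa using hQs)] at hy
  exact ⟨y, Set.mem_image_of_mem _ hyS, hy⟩

theorem Colorable.induce_of_induce_diff {s T : Set V} {n : ℕ} (hT : G.IsStableSet T)
    (h : (G.induce (s \ T)).Colorable n) : (G.induce s).Colorable (n + 1) := by
  classical
  obtain ⟨c⟩ := h
  refine ⟨Coloring.mk
    (fun v => if hv : v.1 ∈ T then Fin.last n else (c ⟨v, v.2, hv⟩).castSucc) ?_⟩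
  intro u v huv
  by_cases hu : u.1 ∈ T <;> by_cases hv : v.1 ∈ T <;> simp only [hu, hv, dite_true, dite_false]
  · exact (hT hu hv (fun e => huv.ne (Subtype.ext e)) huv).elim
  · exact (Fin.castSucc_ne_last _).symm
  · exact Fin.castSucc_ne_last _
  · exact fun e =>
      c.valid (v := ⟨u, u.2, hu⟩) (w := ⟨v, v.2, hv⟩) huv (Fin.castSucc_injective _ e)

theorem exists_colorable_induce_isNClique [Finite V]
    (h : ∀ s : Set V, s.Nonempty → ∃ S : Set s, (G.induce s).IsStrongStableSet S)
    (s : Set V) :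
    ∃ ℓ, (G.induce s).Colorable ℓ ∧ ∃ Q : Finset V, ↑Q ⊆ s ∧ G.IsNClique ℓ Q := by
  classical
  induction s using WellFoundedLT.induction with
  | _ s ih =>
  rcases s.eq_empty_or_nonempty with rfl | hs
  · exact ⟨0, Colorable.of_isEmpty 0, ∅, by simp, by simp⟩
  obtain ⟨S, hS⟩ := h s hs
  -- The empty clique shows that `S` is nonempty.
  obtain ⟨_, ⟨y₀, hy₀, rfl⟩, -⟩ :=
    hS.exists_isClique_insert_of_induce (Set.empty_subset s) isClique_empty
  obtain ⟨ℓ, hcol, Q, hQs, hQ⟩ :=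
    ih (s \ Subtype.val '' S) (Set.sdiff_ssubset_left_iff.2 ⟨y₀, y₀.2, y₀, hy₀, rfl⟩)
  obtain ⟨y, hyS, hyQ_clique⟩ :=
    hS.exists_isClique_insert_of_induce (hQs.trans Set.sdiff_subset) hQ.isClique
  have hyQ : y ∉ Q := fun hy => (hQs hy).2 hyS
  refine ⟨ℓ + 1, hcol.induce_of_induce_diff hS.1.image_val, insert y Q, ?_, hQ.insert ?_⟩
  · rw [Finset.coe_insert]
    exact Set.insert_subset (Subtype.coe_image_subset s S hyS) (hQs.trans Set.sdiff_subset)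
  · exact fun b hb =>
      (isClique_insert.1 hyQ_clique).2 b hb (ne_of_mem_of_not_mem hb hyQ).symm

theorem chromaticNumber_eq_cliqueNum_of_colorable_of_isNClique [Finite V] {n : ℕ}
    {Q : Finset V} (hG : G.Colorable n) (hQ : G.IsNClique n Q) :
    G.chromaticNumber = G.cliqueNum := by
  refine le_antisymm ?_ G.cliqueNum_le_chromaticNumber
  calc G.chromaticNumber ≤ n := hG.chromaticNumber_le
    _ ≤ G.cliqueNum := by exact_mod_cast hQ.card_eq ▸ hQ.isClique.card_le_cliqueNum

end SimpleGraph

/-- If every nonempty induced subgraph of `G` contains a strong stable set, then the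
chromatic number of `G` equals its clique number: there is a proper coloring of `G`
with `ℓ` colors and a clique of `G` of size `ℓ`. -/
theorem chromaticNumber_eq_cliqueNum_of_strongStableSets {V : Type*} [Fintype V]
    (G : SimpleGraph V)
    (h : ∀ s : Set V, s.Nonempty → ∃ S : Set s, (G.induce s).IsStrongStableSet S) :
    G.chromaticNumber = G.cliqueNum ∧
      ∃ (ℓ : ℕ) (_ : G.Coloring (Fin ℓ)) (Q : Finset V), G.IsNClique ℓ Q := by
  obtain ⟨ℓ, hcol, Q, -, hQ⟩ := exists_colorable_induce_isNClique h Set.univ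
  have hG : G.Colorable ℓ := hcol.of_hom (induceUnivIso G).symm.toHom
  exact ⟨chromaticNumber_eq_cliqueNum_of_colorable_of_isNClique hG hQ, ℓ, hG.some, Q, hQ⟩
end
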